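/- arXiv:0710.2629 — 5 statements merged into one kernel-verified Lean document; each statement's English description precedes it below -/
import Mathlib

section
/- Let A<B, α∈(0,1], and let f:[A,B]→ℝ be twice continuously differentiable with f'' α-Hölder continuous on [A,B] and with f'(x)≠0 for all x∈[A,B]. Then there exists a constant C>0, depending only on f, [A,B] and α, such that for all points x₁,x₂,x₃,x₄∈[A,B] with Δ = diam{x₁,x₂,x₃,x₄} > 0 one has |Dist(x₁,x₂,x₃,x₄;f) − 1| ≤ C·|x₁−x₃|·|x₂−x₄|·Δ^{α−1}. -/
/-- Difference quotient of `f` at `a, b`, with the convention that for `a = b`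
it equals the prescribed derivative `f' a`. -/
noncomputable def dq (f f' : ℝ → ℝ) (a b : ℝ) : ℝ :=
  if a = b then f' a else (f a - f b) / (a - b)

/-- Cross-ratio distortion of four points with respect to `f`
(with derivative `f'` used at coinciding points). -/
noncomputable def crDist (f f' : ℝ → ℝ) (x₁ x₂ x₃ x₄ : ℝ) : ℝ :=
  dq f f' x₁ x₂ / dq f f' x₂ x₃ * (dq f f' x₃ x₄ / dq f f' x₄ x₁)

open Set intervalIntegral MeasureTheory

lemma dq_symm (f f' : ℝ → ℝ) (a b : ℝ) : dq f f' a b = dq f f' b a := by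
  unfold dq
  rcases eq_or_ne a b with rfl | h
  · simp
  · rw [if_neg h, if_neg h.symm, ← neg_div_neg_eq]
    ring_nf

section
variable {A B : ℝ} {f f1 : ℝ → ℝ}

lemma conv_mem {A B a b s : ℝ} (ha : a ∈ Icc A B) (hb : b ∈ Icc A B)
    (hs : s ∈ Icc (0:ℝ) 1) : a + s * (b - a) ∈ Icc A B := by
  obtain ⟨ha1, ha2⟩ := ha; obtain ⟨hb1, hb2⟩ := hb; obtain ⟨hs1, hs2⟩ := hs
  constructor <;> nlinarith

lemma abs_sub_le_of_uIcc {v w x : ℝ} (hx : x ∈ uIcc v w) : |x - v| ≤ |w - v| := by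
  rw [Set.mem_uIcc] at hx
  rw [abs_le]
  rcases hx with ⟨h1, h2⟩ | ⟨h1, h2⟩ <;>
    constructor <;> linarith [neg_abs_le (w-v), le_abs_self (w-v)]

-- Taylor-type estimate for f1

lemma ftc_icc {A B : ℝ} (f f1 : ℝ → ℝ)
    (hf1 : ∀ x ∈ Set.Icc A B, HasDerivWithinAt f (f1 x) (Set.Icc A B) x)
    (hc1 : ContinuousOn f1 (Icc A B))
    {a b : ℝ} (ha : a ∈ Icc A B) (hb : b ∈ Icc A B) :
    ∫ x in a..b, f1 x = f b - f a := by
  have hfc : ContinuousOn f (Icc A B) := fun x hx => (hf1 x hx).continuousWithinAt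
  have key : ∀ p q : ℝ, p ∈ Icc A B → q ∈ Icc A B → p ≤ q →
      ∫ x in p..q, f1 x = f q - f p := by
    intro p q hp hq hpq
    apply integral_eq_sub_of_hasDeriv_right_of_le hpq
      (hfc.mono (Icc_subset_Icc hp.1 hq.2))
    · intro x hx
      have hx' : x ∈ Icc A B := ⟨le_trans hp.1 hx.1.le, le_trans hx.2.le hq.2⟩
      have hxo : x ∈ Ioo A B := ⟨lt_of_le_of_lt hp.1 hx.1, lt_of_lt_of_le hx.2 hq.2⟩
      exact ((hf1 x hx').hasDerivAt (Icc_mem_nhds hxo.1 hxo.2)).hasDerivWithinAt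
    · exact (hc1.mono (by rw [uIcc_of_le hpq]; exact Icc_subset_Icc hp.1 hq.2)).intervalIntegrable
  rcases le_total a b with h | h
  · exact key a b ha hb h
  · rw [intervalIntegral.integral_symm, key b a hb ha h]; ring

lemma dq_rep {A B : ℝ} (f f1 : ℝ → ℝ)
    (hf1 : ∀ x ∈ Set.Icc A B, HasDerivWithinAt f (f1 x) (Set.Icc A B) x)
    (hc1 : ContinuousOn f1 (Icc A B))
    {a b : ℝ} (ha : a ∈ Icc A B) (hb : b ∈ Icc A B) :
    dq f f1 a b = ∫ s in (0:ℝ)..1, f1 (a + s * (b - a)) := by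
  rcases eq_or_ne a b with rfl | hab
  · simp [dq]
  · have hba : b - a ≠ 0 := sub_ne_zero.2 (Ne.symm hab)
    have h1 : ∀ s : ℝ, a + s * (b - a) = (b - a) * s + a := fun s => by ring
    simp only [h1]
    rw [intervalIntegral.integral_comp_mul_add f1 hba a]
    rw [mul_zero, zero_add, mul_one]
    have h2 : b - a + a = b := by ring
    rw [h2, ftc_icc f f1 hf1 hc1 ha hb]
    unfold dq
    rw [if_neg hab, smul_eq_mul]
    rw [div_eq_iff (sub_ne_zero.2 hab)]
    field_simp
    ring

section CRaux
variable {A B α H : ℝ} {f f1 f2 : ℝ → ℝ}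

lemma taylor1 (hα : α ∈ Set.Ioc (0 : ℝ) 1) (hH0 : 0 ≤ H)
    (hf2 : ∀ x ∈ Set.Icc A B, HasDerivWithinAt f1 (f2 x) (Set.Icc A B) x)
    (hH : ∀ x ∈ Set.Icc A B, ∀ y ∈ Set.Icc A B, |f2 x - f2 y| ≤ H * |x - y| ^ α)
    {v w : ℝ} (hv : v ∈ Icc A B) (hw : w ∈ Icc A B) :
    |f1 w - f1 v - f2 v * (w - v)| ≤ H * |w - v| ^ (α : ℝ) * |w - v| := by
  set s : Set ℝ := uIcc v w with hs
  have hsub : s ⊆ Icc A B := uIcc_subset_Icc hv hw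
  have hconv : Convex ℝ s := convex_uIcc v w
  have hderiv : ∀ x ∈ s, HasDerivWithinAt
      (fun t => f1 t - f1 v - f2 v * (t - v)) (f2 x - f2 v) s x := by
    intro x hx
    have h1 : HasDerivWithinAt f1 (f2 x) s x := (hf2 x (hsub hx)).mono hsub
    simpa [Pi.sub_def] using (h1.sub_const (f1 v)).sub
      (((hasDerivWithinAt_id x s).sub_const v).const_mul (f2 v))
  have hbd : ∀ x ∈ s, ‖f2 x - f2 v‖ ≤ H * |w - v| ^ (α : ℝ) := by
    intro x hx
    rw [Real.norm_eq_abs]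
    refine le_trans (hH x (hsub hx) v hv) ?_
    exact mul_le_mul_of_nonneg_left
      (Real.rpow_le_rpow (abs_nonneg _) (abs_sub_le_of_uIcc hx) hα.1.le) hH0
  have := Convex.norm_image_sub_le_of_norm_hasDerivWithin_le hderiv hbd hconv
    (left_mem_uIcc : v ∈ s) (right_mem_uIcc : w ∈ s)
  simp only [Real.norm_eq_abs, sub_self, mul_zero, sub_zero] at this
  simpa using this

-- second order Taylor

lemma taylor2 (hα : α ∈ Set.Ioc (0 : ℝ) 1) (hH0 : 0 ≤ H)
    (hf1 : ∀ x ∈ Set.Icc A B, HasDerivWithinAt f (f1 x) (Set.Icc A B) x)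
    (hf2 : ∀ x ∈ Set.Icc A B, HasDerivWithinAt f1 (f2 x) (Set.Icc A B) x)
    (hH : ∀ x ∈ Set.Icc A B, ∀ y ∈ Set.Icc A B, |f2 x - f2 y| ≤ H * |x - y| ^ α)
    {v w : ℝ} (hv : v ∈ Icc A B) (hw : w ∈ Icc A B) :
    |f w - f v - f1 v * (w - v) - f2 v * (w - v)^2 / 2|
      ≤ H * |w - v| ^ (α : ℝ) * |w - v| * |w - v| := by
  set s : Set ℝ := uIcc v w with hs
  have hsub : s ⊆ Icc A B := uIcc_subset_Icc hv hw
  have hconv : Convex ℝ s := convex_uIcc v w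
  have hderiv : ∀ x ∈ s, HasDerivWithinAt
      (fun t => f t - f v - f1 v * (t - v) - f2 v * (t - v)^2 / 2)
      (f1 x - f1 v - f2 v * (x - v)) s x := by
    intro x hx
    have h1 : HasDerivWithinAt f (f1 x) s x := (hf1 x (hsub hx)).mono hsub
    have h2 : HasDerivWithinAt (fun t => f2 v * (t - v)^2 / 2) (f2 v * (x - v)) s x := by
      have := (((hasDerivWithinAt_id x s).sub_const v).pow 2).const_mul (f2 v)
      exact (this.div_const 2).congr_deriv (by norm_num [id]; ring)
    have h3 := ((h1.sub_const (f v)).sub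
      (((hasDerivWithinAt_id x s).sub_const v).const_mul (f1 v))).sub h2
    exact h3.congr_deriv (by ring)
  have hbd : ∀ x ∈ s, ‖f1 x - f1 v - f2 v * (x - v)‖ ≤ H * |w - v| ^ (α : ℝ) * |w - v| := by
    intro x hx
    rw [Real.norm_eq_abs]
    refine le_trans (taylor1 hα hH0 hf2 hH hv (hsub hx)) ?_
    have h0 := abs_sub_le_of_uIcc hx
    have h1 : |x - v| ^ (α:ℝ) ≤ |w - v| ^ (α:ℝ) :=
      Real.rpow_le_rpow (abs_nonneg _) h0 hα.1.le
    have h2 : (0:ℝ) ≤ |x - v| ^ (α:ℝ) := Real.rpow_nonneg (abs_nonneg _) _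
    have h3 : (0:ℝ) ≤ |w - v| ^ (α:ℝ) := Real.rpow_nonneg (abs_nonneg _) _
    have h4 : H * |x - v| ^ (α:ℝ) ≤ H * |w - v| ^ (α:ℝ) := by nlinarith
    exact mul_le_mul h4 h0 (abs_nonneg _) (by positivity)
  have := Convex.norm_image_sub_le_of_norm_hasDerivWithin_le hderiv hbd hconv
    (left_mem_uIcc : v ∈ s) (right_mem_uIcc : w ∈ s)
  simp only [Real.norm_eq_abs, sub_self, mul_zero, sub_zero] at this
  simpa [mul_assoc] using this

lemma mem_Icc_add_of_uIcc {A B y d t : ℝ} (hy : y ∈ Icc A B) (hyd : y + d ∈ Icc A B)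
    (ht : t ∈ uIcc (0:ℝ) d) : y + t ∈ Icc A B := by
  rw [Set.mem_uIcc] at ht
  obtain ⟨h1, h2⟩ := hy; obtain ⟨h3, h4⟩ := hyd
  rcases ht with ⟨h5, h6⟩ | ⟨h5, h6⟩ <;> constructor <;> linarith

-- double difference of f1 estimate

lemma ddiff_f1 (hα : α ∈ Set.Ioc (0 : ℝ) 1) (hH0 : 0 ≤ H)
    (hf2 : ∀ x ∈ Set.Icc A B, HasDerivWithinAt f1 (f2 x) (Set.Icc A B) x)
    (hH : ∀ x ∈ Set.Icc A B, ∀ y ∈ Set.Icc A B, |f2 x - f2 y| ≤ H * |x - y| ^ α)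
    {y y' d : ℝ} (hy : y ∈ Icc A B) (hyd : y + d ∈ Icc A B)
    (hy' : y' ∈ Icc A B) (hy'd : y' + d ∈ Icc A B) :
    |(f1 (y + d) - f1 y) - (f1 (y' + d) - f1 y')| ≤ H * |y - y'| ^ (α:ℝ) * |d| := by
  set s : Set ℝ := uIcc (0:ℝ) d with hs
  have hconv : Convex ℝ s := convex_uIcc 0 d
  have hderiv : ∀ t ∈ s, HasDerivWithinAt
      (fun t => f1 (y + t) - f1 (y' + t)) (f2 (y + t) - f2 (y' + t)) s t := by
    intro t ht
    have m1 : MapsTo (fun t => y + t) s (Icc A B) :=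
      fun u hu => mem_Icc_add_of_uIcc hy hyd hu
    have m2 : MapsTo (fun t => y' + t) s (Icc A B) :=
      fun u hu => mem_Icc_add_of_uIcc hy' hy'd hu
    have d1 : HasDerivWithinAt (fun t => y + t) 1 s t := by
      simpa using (hasDerivWithinAt_id t s).const_add y
    have d2 : HasDerivWithinAt (fun t => y' + t) 1 s t := by
      simpa using (hasDerivWithinAt_id t s).const_add y'
    have c1 := HasDerivWithinAt.comp t (hf2 (y + t) (m1 ht)) d1 m1
    have c2 := HasDerivWithinAt.comp t (hf2 (y' + t) (m2 ht)) d2 m2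
    simpa [Function.comp_def, Pi.sub_def] using c1.sub c2
  have hbd : ∀ t ∈ s, ‖f2 (y + t) - f2 (y' + t)‖ ≤ H * |y - y'| ^ (α:ℝ) := by
    intro t ht
    rw [Real.norm_eq_abs]
    have m1 : (y + t) ∈ Icc A B := mem_Icc_add_of_uIcc hy hyd ht
    have m2 : (y' + t) ∈ Icc A B := mem_Icc_add_of_uIcc hy' hy'd ht
    have := hH (y + t) m1 (y' + t) m2
    simpa [add_sub_add_right_eq_sub] using this
  have := Convex.norm_image_sub_le_of_norm_hasDerivWithin_le hderiv hbd hconv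
    (left_mem_uIcc : (0:ℝ) ∈ s) (right_mem_uIcc : d ∈ s)
  have heq : f1 (y + d) - f1 (y' + d) - (f1 y - f1 y')
      = f1 (y + d) - f1 y - (f1 (y' + d) - f1 y') := by ring
  simpa [Real.norm_eq_abs, heq] using this

lemma intInt (hc1 : ContinuousOn f1 (Icc A B))
    {a b : ℝ} (ha : a ∈ Icc A B) (hb : b ∈ Icc A B) :
    IntervalIntegrable (fun s => f1 (a + s * (b - a))) volume 0 1 := by
  apply ContinuousOn.intervalIntegrable
  apply hc1.comp (Continuous.continuousOn (by continuity))
  intro s hs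
  rw [uIcc_of_le (zero_le_one : (0:ℝ) ≤ 1)] at hs
  exact conv_mem ha hb hs

-- Lipschitz estimate for f1

lemma lip_f1 {M2 : ℝ}
    (hf2 : ∀ x ∈ Set.Icc A B, HasDerivWithinAt f1 (f2 x) (Set.Icc A B) x)
    (hM2 : ∀ x ∈ Icc A B, |f2 x| ≤ M2)
    {p q : ℝ} (hp : p ∈ Icc A B) (hq : q ∈ Icc A B) :
    |f1 p - f1 q| ≤ M2 * |p - q| := by
  have := Convex.norm_image_sub_le_of_norm_hasDerivWithin_le hf2
    (fun x hx => by rw [Real.norm_eq_abs]; exact hM2 x hx) (convex_Icc A B) hq hp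
  simpa [Real.norm_eq_abs] using this

-- Lipschitz estimate for dq in the second argument

lemma dq_lip {M2 : ℝ}
    (hf2 : ∀ x ∈ Set.Icc A B, HasDerivWithinAt f1 (f2 x) (Set.Icc A B) x)
    (hM2 : ∀ x ∈ Icc A B, |f2 x| ≤ M2)
    (hc1 : ContinuousOn f1 (Icc A B))
    (hrep : ∀ a ∈ Icc A B, ∀ b ∈ Icc A B,
      dq f f1 a b = ∫ s in (0:ℝ)..1, f1 (a + s * (b - a)))
    {a b b' : ℝ} (ha : a ∈ Icc A B) (hb : b ∈ Icc A B) (hb' : b' ∈ Icc A B) :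
    |dq f f1 a b - dq f f1 a b'| ≤ M2 * |b - b'| := by
  have hM2nn : 0 ≤ M2 := le_trans (abs_nonneg _) (hM2 a ha)
  rw [hrep a ha b hb, hrep a ha b' hb',
    ← intervalIntegral.integral_sub (intInt hc1 ha hb) (intInt hc1 ha hb')]
  have key : ∀ s ∈ Set.uIoc (0:ℝ) 1,
      ‖f1 (a + s * (b - a)) - f1 (a + s * (b' - a))‖ ≤ M2 * |b - b'| := by
    intro s hs
    rw [Set.uIoc_of_le (zero_le_one : (0:ℝ) ≤ 1), Set.mem_Ioc] at hs
    have hsIcc : s ∈ Icc (0:ℝ) 1 := ⟨hs.1.le, hs.2⟩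
    have h1 := lip_f1 hf2 hM2 (conv_mem ha hb hsIcc) (conv_mem ha hb' hsIcc)
    rw [Real.norm_eq_abs]
    refine le_trans h1 ?_
    have h2 : |a + s * (b - a) - (a + s * (b' - a))| = s * |b - b'| := by
      rw [show a + s * (b - a) - (a + s * (b' - a)) = s * (b - b') by ring,
        abs_mul, abs_of_nonneg hs.1.le]
    rw [h2]
    nlinarith [mul_nonneg (mul_nonneg hM2nn (abs_nonneg (b - b'))) (sub_nonneg.2 hs.2)]
  have := intervalIntegral.norm_integral_le_of_norm_le_const key
  simpa [Real.norm_eq_abs] using this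

lemma S1_est (hα : α ∈ Set.Ioc (0 : ℝ) 1) (hH0 : 0 ≤ H)
    (hf2 : ∀ x ∈ Set.Icc A B, HasDerivWithinAt f1 (f2 x) (Set.Icc A B) x)
    (hH : ∀ x ∈ Set.Icc A B, ∀ y ∈ Set.Icc A B, |f2 x - f2 y| ≤ H * |x - y| ^ α)
    (hc1 : ContinuousOn f1 (Icc A B))
    (hrep : ∀ a ∈ Icc A B, ∀ b ∈ Icc A B,
      dq f f1 a b = ∫ s in (0:ℝ)..1, f1 (a + s * (b - a)))
    {y₁ y₂ y₃ y₄ : ℝ} (h1 : y₁ ∈ Icc A B) (h2 : y₂ ∈ Icc A B)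
    (h3 : y₃ ∈ Icc A B) (h4 : y₄ ∈ Icc A B) :
    |dq f f1 y₃ y₄ - dq f f1 y₁ y₄ - dq f f1 y₃ y₂ + dq f f1 y₁ y₂|
      ≤ H * |y₁ - y₃| * |y₂ - y₄| ^ (α:ℝ) := by
  have i34 := intInt hc1 h3 h4
  have i14 := intInt hc1 h1 h4
  have i32 := intInt hc1 h3 h2
  have i12 := intInt hc1 h1 h2
  rw [hrep y₃ h3 y₄ h4, hrep y₁ h1 y₄ h4, hrep y₃ h3 y₂ h2, hrep y₁ h1 y₂ h2,
    ← intervalIntegral.integral_sub i34 i14,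
    ← intervalIntegral.integral_sub (i34.sub i14) i32,
    ← intervalIntegral.integral_add ((i34.sub i14).sub i32) i12]
  have key : ∀ s ∈ Set.uIoc (0:ℝ) 1,
      ‖f1 (y₃ + s * (y₄ - y₃)) - f1 (y₁ + s * (y₄ - y₁)) - f1 (y₃ + s * (y₂ - y₃))
        + f1 (y₁ + s * (y₂ - y₁))‖ ≤ H * |y₁ - y₃| * |y₂ - y₄| ^ (α:ℝ) := by
    intro s hs
    rw [Set.uIoc_of_le (zero_le_one : (0:ℝ) ≤ 1), Set.mem_Ioc] at hs
    have hsIcc : s ∈ Icc (0:ℝ) 1 := ⟨hs.1.le, hs.2⟩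
    set y : ℝ := y₁ + s * (y₂ - y₁) with hy_def
    set y' : ℝ := y₁ + s * (y₄ - y₁) with hy'_def
    set d : ℝ := (1 - s) * (y₃ - y₁) with hd_def
    have e1 : y₃ + s * (y₄ - y₃) = y' + d := by rw [hy'_def, hd_def]; ring
    have e2 : y₃ + s * (y₂ - y₃) = y + d := by rw [hy_def, hd_def]; ring
    have my : y ∈ Icc A B := conv_mem h1 h2 hsIcc
    have my' : y' ∈ Icc A B := conv_mem h1 h4 hsIcc
    have myd : y + d ∈ Icc A B := by rw [← e2]; exact conv_mem h3 h2 hsIcc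
    have my'd : y' + d ∈ Icc A B := by rw [← e1]; exact conv_mem h3 h4 hsIcc
    have hdd := ddiff_f1 hα hH0 hf2 hH my' my'd my myd
    rw [Real.norm_eq_abs]
    have e3 : f1 (y₃ + s * (y₄ - y₃)) - f1 (y₁ + s * (y₄ - y₁)) -
        f1 (y₃ + s * (y₂ - y₃)) + f1 (y₁ + s * (y₂ - y₁))
        = (f1 (y' + d) - f1 y') - (f1 (y + d) - f1 y) := by
      rw [e1, e2]; ring
    rw [e3]
    refine le_trans hdd ?_
    have e4 : |y' - y| = s * |y₄ - y₂| := by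
      rw [show y' - y = s * (y₄ - y₂) by rw [hy_def, hy'_def]; ring, abs_mul,
        abs_of_nonneg hs.1.le]
    have e5 : |d| ≤ |y₁ - y₃| := by
      rw [hd_def, abs_mul, abs_sub_comm y₃ y₁,
        abs_of_nonneg (by linarith [hs.1] : (0:ℝ) ≤ 1 - s)]
      nlinarith [abs_nonneg (y₁ - y₃), hs.1]
    have e6 : |y' - y| ^ (α:ℝ) ≤ |y₂ - y₄| ^ (α:ℝ) := by
      rw [e4, abs_sub_comm y₄ y₂]
      calc (s * |y₂ - y₄|) ^ (α:ℝ) ≤ (1 * |y₂ - y₄|) ^ (α:ℝ) := by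
            apply Real.rpow_le_rpow (mul_nonneg hs.1.le (abs_nonneg _))
              (by nlinarith [abs_nonneg (y₂ - y₄), hs.2]) hα.1.le
        _ = |y₂ - y₄| ^ (α:ℝ) := by rw [one_mul]
    calc H * |y' - y| ^ (α:ℝ) * |d| ≤ H * |y₂ - y₄| ^ (α:ℝ) * |y₁ - y₃| := by
          apply mul_le_mul (mul_le_mul_of_nonneg_left e6 hH0) e5 (abs_nonneg _)
          positivity
      _ = H * |y₁ - y₃| * |y₂ - y₄| ^ (α:ℝ) := by ring
  have := intervalIntegral.norm_integral_le_of_norm_le_const key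
  rw [Real.norm_eq_abs] at this
  norm_num at this
  exact this

lemma dq_val
    (hf1 : ∀ x ∈ Set.Icc A B, HasDerivWithinAt f (f1 x) (Set.Icc A B) x)
    {a b : ℝ} (ha : a ∈ Icc A B) (hb : b ∈ Icc A B) :
    ∃ c ∈ Icc A B, dq f f1 a b = f1 c := by
  have hfc : ContinuousOn f (Icc A B) := fun x hx => (hf1 x hx).continuousWithinAt
  have key : ∀ p q : ℝ, p ∈ Icc A B → q ∈ Icc A B → p < q →
      ∃ c ∈ Icc A B, dq f f1 p q = f1 c := by
    intro p q hp hq hpq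
    have hco : ContinuousOn f (Icc p q) := hfc.mono (Icc_subset_Icc hp.1 hq.2)
    have hdo : ∀ x ∈ Ioo p q, HasDerivAt f (f1 x) x := by
      intro x hx
      have hx' : x ∈ Icc A B := ⟨le_trans hp.1 hx.1.le, le_trans hx.2.le hq.2⟩
      exact (hf1 x hx').hasDerivAt
        (Icc_mem_nhds (lt_of_le_of_lt hp.1 hx.1) (lt_of_lt_of_le hx.2 hq.2))
    obtain ⟨c, hc, hceq⟩ := exists_hasDerivAt_eq_slope f f1 hpq hco hdo
    refine ⟨c, ⟨le_trans hp.1 hc.1.le, le_trans hc.2.le hq.2⟩, ?_⟩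
    unfold dq
    rw [if_neg (ne_of_lt hpq), hceq, ← neg_div_neg_eq]
    ring_nf
  rcases lt_trichotomy a b with h | rfl | h
  · exact key a b ha hb h
  · exact ⟨a, ha, by simp [dq]⟩
  · obtain ⟨c, hc, hceq⟩ := key b a hb ha h
    exact ⟨c, hc, by rw [dq_symm]; exact hceq⟩

lemma S2_est (hα : α ∈ Set.Ioc (0 : ℝ) 1) (hH0 : 0 ≤ H)
    (hf1 : ∀ x ∈ Set.Icc A B, HasDerivWithinAt f (f1 x) (Set.Icc A B) x)
    (hf2 : ∀ x ∈ Set.Icc A B, HasDerivWithinAt f1 (f2 x) (Set.Icc A B) x)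
    (hH : ∀ x ∈ Set.Icc A B, ∀ y ∈ Set.Icc A B, |f2 x - f2 y| ≤ H * |x - y| ^ α)
    {x₁ x₂ x₃ x₄ δ : ℝ} (h1 : x₁ ∈ Icc A B) (h2 : x₂ ∈ Icc A B)
    (h3 : x₃ ∈ Icc A B) (h4 : x₄ ∈ Icc A B) (hδ : 0 < δ)
    (hsep : ∀ w ∈ uIcc x₁ x₃, ∀ t ∈ uIcc x₂ x₄, δ ≤ |w - t|) :
    |dq f f1 x₃ x₄ - dq f f1 x₁ x₄ - dq f f1 x₃ x₂ + dq f f1 x₁ x₂|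
      ≤ 3 * H * δ ^ (α - 1 : ℝ) * |x₁ - x₃| * |x₂ - x₄| := by
  set K : Set ℝ := uIcc x₁ x₃ with hK
  set J : Set ℝ := uIcc x₂ x₄ with hJ
  have hKIcc : K ⊆ Icc A B := uIcc_subset_Icc h1 h3
  have hJIcc : J ⊆ Icc A B := uIcc_subset_Icc h2 h4
  have hne : ∀ w ∈ K, ∀ t ∈ J, w ≠ t := by
    intro w hw t ht heq
    have := hsep w hw t ht
    rw [heq, sub_self, abs_zero] at this
    linarith
  set Ghat : ℝ → ℝ → ℝ := fun u t => (f u - f t - f1 t * (u - t)) / (u - t)^2 with hGhat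
  -- derivative bound for Ghat in first variable
  have stepc : ∀ t ∈ J, ∀ w ∈ K,
      HasDerivWithinAt (fun u => Ghat u t)
        (((f1 w - f1 t) * (w - t)^2 -
          (f w - f t - f1 t * (w - t)) * (2 * (w - t))) / ((w - t)^2)^2) K w := by
    intro t ht w hw
    have hwt : w - t ≠ 0 := sub_ne_zero.2 (hne w hw t ht)
    have hfw : HasDerivWithinAt f (f1 w) K w := (hf1 w (hKIcc hw)).mono hKIcc
    have hnum : HasDerivWithinAt (fun u => f u - f t - f1 t * (u - t))
        (f1 w - f1 t) K w := by
      simpa [Pi.sub_def] using (hfw.sub_const (f t)).sub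
        (((hasDerivWithinAt_id w K).sub_const t).const_mul (f1 t))
    have hden : HasDerivWithinAt (fun u => (u - t)^2) (2 * (w - t)) K w := by
      have := ((hasDerivWithinAt_id w K).sub_const t).pow 2
      simpa [mul_comm, Pi.pow_def] using this
    exact hnum.div hden (pow_ne_zero 2 hwt)
  have stepc_bd : ∀ t ∈ J, ∀ w ∈ K,
      |((f1 w - f1 t) * (w - t)^2 -
        (f w - f t - f1 t * (w - t)) * (2 * (w - t))) / ((w - t)^2)^2|
      ≤ 3 * H * δ ^ (α - 1 : ℝ) := by
    intro t ht w hw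
    have hwt : w - t ≠ 0 := sub_ne_zero.2 (hne w hw t ht)
    set r : ℝ := |w - t| with hr
    have hrpos : 0 < r := abs_pos.2 hwt
    have hrδ : δ ≤ r := hsep w hw t ht
    have e1 : ((f1 w - f1 t) * (w - t)^2 -
        (f w - f t - f1 t * (w - t)) * (2 * (w - t))) / ((w - t)^2)^2
        = ((f1 w - f1 t - f2 t * (w - t)) * (w - t)
            - 2 * (f w - f t - f1 t * (w - t) - f2 t * (w - t)^2 / 2)) / (w - t)^3 := by
      field_simp
      ring
    rw [e1, abs_div]
    have hT1 := taylor1 hα hH0 hf2 hH (hJIcc ht) (hKIcc hw)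
    have hT2 := taylor2 hα hH0 hf1 hf2 hH (hJIcc ht) (hKIcc hw)
    have hnum_bd : |(f1 w - f1 t - f2 t * (w - t)) * (w - t)
        - 2 * (f w - f t - f1 t * (w - t) - f2 t * (w - t)^2 / 2)|
        ≤ 3 * H * r ^ (α:ℝ) * r^2 := by
      have habs := abs_sub
        ((f1 w - f1 t - f2 t * (w - t)) * (w - t))
        (2 * (f w - f t - f1 t * (w - t) - f2 t * (w - t)^2 / 2))
      have b1 : |(f1 w - f1 t - f2 t * (w - t)) * (w - t)| ≤ H * r ^ (α:ℝ) * r * r := by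
        rw [abs_mul]
        exact mul_le_mul_of_nonneg_right hT1 (abs_nonneg _)
      have b2 : |2 * (f w - f t - f1 t * (w - t) - f2 t * (w - t)^2 / 2)|
          ≤ 2 * (H * r ^ (α:ℝ) * r * r) := by
        rw [abs_mul, abs_two]
        exact mul_le_mul_of_nonneg_left hT2 (by norm_num)
      calc |(f1 w - f1 t - f2 t * (w - t)) * (w - t)
          - 2 * (f w - f t - f1 t * (w - t) - f2 t * (w - t)^2 / 2)|
          ≤ |(f1 w - f1 t - f2 t * (w - t)) * (w - t)|
            + |2 * (f w - f t - f1 t * (w - t) - f2 t * (w - t)^2 / 2)| := abs_sub _ _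
        _ ≤ H * r ^ (α:ℝ) * r * r + 2 * (H * r ^ (α:ℝ) * r * r) := add_le_add b1 b2
        _ = 3 * H * r ^ (α:ℝ) * r^2 := by ring
    have hden_eq : |(w - t)^3| = r^3 := by
      rw [abs_pow]
    rw [hden_eq]
    have hr3 : (0:ℝ) < r^3 := pow_pos hrpos 3
    calc _ ≤ (3 * H * r ^ (α:ℝ) * r^2) / r^3 := (div_le_div_iff_of_pos_right hr3).mpr hnum_bd
      _ = 3 * H * r ^ (α - 1 : ℝ) := by
          rw [show r ^ (α - 1 : ℝ) = r ^ (α:ℝ) / r by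
            rw [Real.rpow_sub hrpos, Real.rpow_one]]
          field_simp
      _ ≤ 3 * H * δ ^ (α - 1 : ℝ) := by
          apply mul_le_mul_of_nonneg_left
            (Real.rpow_le_rpow_of_nonpos hδ hrδ (by linarith [hα.2]))
          linarith
  -- MVT in the first variable
  have stepc_mvt : ∀ t ∈ J, |Ghat x₁ t - Ghat x₃ t|
      ≤ 3 * H * δ ^ (α - 1 : ℝ) * |x₁ - x₃| := by
    intro t ht
    have := Convex.norm_image_sub_le_of_norm_hasDerivWithin_le
      (stepc t ht) (fun w hw => by rw [Real.norm_eq_abs]; exact stepc_bd t ht w hw)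
      (convex_uIcc x₁ x₃) (right_mem_uIcc : x₃ ∈ K) (left_mem_uIcc : x₁ ∈ K)
    simpa [Real.norm_eq_abs] using this
  -- derivative of F on J
  set F : ℝ → ℝ := fun t => (f x₁ - f t) / (x₁ - t) - (f x₃ - f t) / (x₃ - t) with hF
  have stepb : ∀ t ∈ J, HasDerivWithinAt F (Ghat x₁ t - Ghat x₃ t) J t := by
    intro t ht
    have hft : HasDerivWithinAt f (f1 t) J t := (hf1 t (hJIcc ht)).mono hJIcc
    have hcomp : ∀ u ∈ K, HasDerivWithinAt (fun z => (f u - f z) / (u - z))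
        (Ghat u t) J t := by
      intro u hu
      have hut : u - t ≠ 0 := sub_ne_zero.2 (hne u hu t ht)
      have hnum : HasDerivWithinAt (fun z => f u - f z) (-f1 t) J t := by
        simpa [Pi.sub_def] using (hasDerivWithinAt_const t J (f u)).sub hft
      have hden : HasDerivWithinAt (fun z => u - z) (-1) J t := by
        simpa [Pi.sub_def] using (hasDerivWithinAt_const t J u).sub (hasDerivWithinAt_id t J)
      have := hnum.div hden hut
      refine HasDerivWithinAt.congr_deriv this ?_
      rw [hGhat]
      field_simp
      ring
    exact (hcomp x₁ (left_mem_uIcc : x₁ ∈ K)).sub (hcomp x₃ (right_mem_uIcc : x₃ ∈ K))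
  -- MVT for F
  have stepd : |F x₂ - F x₄| ≤ 3 * H * δ ^ (α - 1 : ℝ) * |x₁ - x₃| * |x₂ - x₄| := by
    have := Convex.norm_image_sub_le_of_norm_hasDerivWithin_le
      stepb (fun t ht => by rw [Real.norm_eq_abs]; exact stepc_mvt t ht)
      (convex_uIcc x₂ x₄) (right_mem_uIcc : x₄ ∈ J) (left_mem_uIcc : x₂ ∈ J)
    rw [Real.norm_eq_abs, Real.norm_eq_abs] at this
    exact this
  -- identify S with F x₂ - F x₄
  have hq : ∀ u ∈ K, ∀ t ∈ J, dq f f1 u t = (f u - f t) / (u - t) := by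
    intro u hu t ht
    unfold dq
    rw [if_neg (hne u hu t ht)]
  have hx1K : x₁ ∈ K := left_mem_uIcc
  have hx3K : x₃ ∈ K := right_mem_uIcc
  have hx2J : x₂ ∈ J := left_mem_uIcc
  have hx4J : x₄ ∈ J := right_mem_uIcc
  have hSF : dq f f1 x₃ x₄ - dq f f1 x₁ x₄ - dq f f1 x₃ x₂ + dq f f1 x₁ x₂
      = F x₂ - F x₄ := by
    rw [hq x₃ hx3K x₄ hx4J, hq x₁ hx1K x₄ hx4J, hq x₃ hx3K x₂ hx2J, hq x₁ hx1K x₂ hx2J,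
      hF]
    ring
  rw [hSF]
  exact stepd

end CRaux

set_option maxHeartbeats 2000000 in
theorem cross_ratio_distortion_C2_holder
    (A B α : ℝ) (hAB : A < B) (hα : α ∈ Set.Ioc (0 : ℝ) 1)
    (f f1 f2 : ℝ → ℝ)
    (hf1 : ∀ x ∈ Set.Icc A B, HasDerivWithinAt f (f1 x) (Set.Icc A B) x)
    (hf2 : ∀ x ∈ Set.Icc A B, HasDerivWithinAt f1 (f2 x) (Set.Icc A B) x)
    (H : ℝ)
    (hH : ∀ x ∈ Set.Icc A B, ∀ y ∈ Set.Icc A B, |f2 x - f2 y| ≤ H * |x - y| ^ α)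
    (hf1ne : ∀ x ∈ Set.Icc A B, f1 x ≠ 0) :
    ∃ C > 0, ∀ x₁ ∈ Set.Icc A B, ∀ x₂ ∈ Set.Icc A B, ∀ x₃ ∈ Set.Icc A B,
      ∀ x₄ ∈ Set.Icc A B,
      0 < Metric.diam ({x₁, x₂, x₃, x₄} : Set ℝ) →
      |crDist f f1 x₁ x₂ x₃ x₄ - 1| ≤
        C * |x₁ - x₃| * |x₂ - x₄| *
          Metric.diam ({x₁, x₂, x₃, x₄} : Set ℝ) ^ (α - 1) := by
  have hA : A ∈ Icc A B := ⟨le_refl A, hAB.le⟩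
  have hB : B ∈ Icc A B := ⟨hAB.le, le_refl B⟩
  have hα1 : (0:ℝ) < α := hα.1
  have hα2 : α ≤ 1 := hα.2
  have hBA : (0:ℝ) < B - A := by linarith
  -- H is nonnegative
  have hH0 : 0 ≤ H := by
    have h := hH A hA B hB
    have h2 : (0:ℝ) < |A - B| ^ (α:ℝ) :=
      Real.rpow_pos_of_pos (abs_pos.2 (by linarith)) _
    nlinarith [abs_nonneg (f2 A - f2 B)]
  -- continuity
  have hc1 : ContinuousOn f1 (Icc A B) := fun x hx => (hf2 x hx).continuousWithinAt
  -- bound on f2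
  set M2 : ℝ := |f2 A| + H * (B - A) ^ (α:ℝ) with hM2def
  have hM2 : ∀ x ∈ Icc A B, |f2 x| ≤ M2 := by
    intro x hx
    have h1 := hH x hx A hA
    have h2 : |x - A| ^ (α:ℝ) ≤ (B - A) ^ (α:ℝ) := by
      apply Real.rpow_le_rpow (abs_nonneg _) _ hα1.le
      rw [abs_of_nonneg (by linarith [hx.1])]
      linarith [hx.2]
    calc |f2 x| ≤ |f2 x - f2 A| + |f2 A| := by
          have := abs_sub_abs_le_abs_sub (f2 x) (f2 A)
          have := abs_add_le (f2 x - f2 A) (f2 A)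
          calc |f2 x| = |(f2 x - f2 A) + f2 A| := by ring_nf
            _ ≤ |f2 x - f2 A| + |f2 A| := abs_add_le _ _
      _ ≤ H * |x - A| ^ (α:ℝ) + |f2 A| := by linarith
      _ ≤ M2 := by rw [hM2def]; nlinarith
  have hM2nn : 0 ≤ M2 := le_trans (abs_nonneg _) (hM2 A hA)
  -- bounds on f1
  obtain ⟨cM, hcM, hMx⟩ := isCompact_Icc.exists_isMaxOn ⟨A, hA⟩ hc1.abs
  set M : ℝ := |f1 cM| with hMdef
  have hMb : ∀ x ∈ Icc A B, |f1 x| ≤ M := fun x hx => hMx hx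
  have hMnn : 0 ≤ M := abs_nonneg _
  obtain ⟨cm, hcm, hmx⟩ := isCompact_Icc.exists_isMinOn ⟨A, hA⟩ hc1.abs
  set m : ℝ := |f1 cm| with hmdef
  have hmb : ∀ x ∈ Icc A B, m ≤ |f1 x| := fun x hx => hmx hx
  have hm0 : 0 < m := abs_pos.2 (hf1ne cm hcm)
  -- representation
  have hrep : ∀ a ∈ Icc A B, ∀ b ∈ Icc A B,
      dq f f1 a b = ∫ s in (0:ℝ)..1, f1 (a + s * (b - a)) :=
    fun a ha b hb => dq_rep f f1 hf1 hc1 ha hb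
  -- dq bounds
  have hdqM : ∀ a ∈ Icc A B, ∀ b ∈ Icc A B, |dq f f1 a b| ≤ M := by
    intro a ha b hb
    obtain ⟨c, hc, hceq⟩ := dq_val hf1 ha hb
    rw [hceq]; exact hMb c hc
  have hdqm : ∀ a ∈ Icc A B, ∀ b ∈ Icc A B, m ≤ |dq f f1 a b| := by
    intro a ha b hb
    obtain ⟨c, hc, hceq⟩ := dq_val hf1 ha hb
    rw [hceq]; exact hmb c hc
  refine ⟨(6 * M * H + M2 ^ 2 * (B - A) ^ (1 - α : ℝ) + 1) / (m * m), by positivity, ?_⟩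
  intro x₁ hx1 x₂ hx2 x₃ hx3 x₄ hx4 hΔpos
  set Δ : ℝ := Metric.diam ({x₁, x₂, x₃, x₄} : Set ℝ) with hΔdef
  have hΔBA : Δ ≤ B - A := by
    rw [hΔdef, ← Real.diam_Icc hAB.le]
    apply Metric.diam_mono _ (Metric.isBounded_Icc A B)
    intro p hp
    simp only [Set.mem_insert_iff, Set.mem_singleton_iff] at hp
    rcases hp with rfl | rfl | rfl | rfl <;> assumption
  have hΔ1 : (B - A) ^ (α - 1 : ℝ) ≤ Δ ^ (α - 1 : ℝ) :=
    Real.rpow_le_rpow_of_nonpos hΔpos hΔBA (by linarith)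
  have hΔnn : (0:ℝ) ≤ Δ ^ (α - 1 : ℝ) := Real.rpow_nonneg (by positivity) _
  -- abbreviations
  set d12 : ℝ := dq f f1 x₁ x₂ with h12
  set d32 : ℝ := dq f f1 x₃ x₂ with h32
  set d14 : ℝ := dq f f1 x₁ x₄ with h14
  set d34 : ℝ := dq f f1 x₃ x₄ with h34
  set S : ℝ := d34 - d14 - d32 + d12 with hSdef
  -- cross ratio minus 1 identity
  have hd32ne : d32 ≠ 0 := by
    intro h
    have := hdqm x₃ hx3 x₂ hx2
    rw [← h32, h, abs_zero] at this
    linarith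
  have hd14ne : d14 ≠ 0 := by
    intro h
    have := hdqm x₁ hx1 x₄ hx4
    rw [← h14, h, abs_zero] at this
    linarith
  have hkey : crDist f f1 x₁ x₂ x₃ x₄ - 1
      = (d12 * S - (d12 - d32) * (d12 - d14)) / (d32 * d14) := by
    unfold crDist
    rw [dq_symm f f1 x₂ x₃, dq_symm f f1 x₄ x₁, ← h12, ← h32, ← h14, ← h34, hSdef]
    field_simp
    ring
  -- helper for (Δ/c)^(α-1) ≤ c * Δ^(α-1)
  have hdiv : ∀ c : ℝ, 1 ≤ c → (Δ / c) ^ (α - 1 : ℝ) ≤ c * Δ ^ (α - 1 : ℝ) := by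
    intro c hc
    have hcpos : (0:ℝ) < c := by linarith
    rw [Real.div_rpow hΔpos.le hcpos.le]
    have h4 : c ^ (-1 : ℝ) ≤ c ^ (α - 1 : ℝ) :=
      Real.rpow_le_rpow_of_exponent_le hc (by linarith)
    have h5 : c ^ (-1 : ℝ) = 1 / c := by
      rw [Real.rpow_neg_one, one_div]
    calc Δ ^ (α - 1 : ℝ) / c ^ (α - 1 : ℝ) ≤ Δ ^ (α - 1 : ℝ) / (1 / c) := by
          apply div_le_div_of_nonneg_left hΔnn (by positivity)
          rw [← h5]; exact h4
      _ = c * Δ ^ (α - 1 : ℝ) := by field_simp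
  -- bound on S
  have hSbound : |S| ≤ 6 * H * |x₁ - x₃| * |x₂ - x₄| * Δ ^ (α - 1 : ℝ) := by
    rcases eq_or_ne x₁ x₃ with h13 | h13
    · have hz : S = 0 := by rw [hSdef, h34, h14, h32, h12, h13]; ring
      rw [hz, abs_zero]; positivity
    rcases eq_or_ne x₂ x₄ with h24 | h24
    · have hz : S = 0 := by rw [hSdef, h34, h14, h32, h12, h24]; ring
      rw [hz, abs_zero]; positivity
    have hu : 0 < |x₁ - x₃| := abs_pos.2 (sub_ne_zero.2 h13)
    have hv : 0 < |x₂ - x₄| := abs_pos.2 (sub_ne_zero.2 h24)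
    by_cases hcase1 : Δ ≤ 4 * |x₂ - x₄|
    · have hS1 := S1_est hα hH0 hf2 hH hc1 hrep hx1 hx2 hx3 hx4
      have hvα : |x₂ - x₄| ^ (α : ℝ) ≤ 4 * Δ ^ (α - 1 : ℝ) * |x₂ - x₄| := by
        have e : |x₂ - x₄| ^ (α : ℝ) = |x₂ - x₄| ^ (α - 1 : ℝ) * |x₂ - x₄| := by
          rw [show (α : ℝ) = (α - 1) + 1 by ring, Real.rpow_add hv, Real.rpow_one]
          norm_num
        have h2 : |x₂ - x₄| ^ (α - 1 : ℝ) ≤ (Δ / 4) ^ (α - 1 : ℝ) :=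
          Real.rpow_le_rpow_of_nonpos (by linarith) (by linarith) (by linarith)
        have h3 := hdiv 4 (by norm_num)
        rw [e]
        have := le_trans h2 h3
        nlinarith [hv.le]
      calc |S| ≤ H * |x₁ - x₃| * |x₂ - x₄| ^ (α : ℝ) := hS1
        _ ≤ H * |x₁ - x₃| * (4 * Δ ^ (α - 1 : ℝ) * |x₂ - x₄|) :=
            mul_le_mul_of_nonneg_left hvα (by positivity)
        _ ≤ 6 * H * |x₁ - x₃| * |x₂ - x₄| * Δ ^ (α - 1 : ℝ) := by
            nlinarith [mul_nonneg (mul_nonneg (mul_nonneg hH0 hu.le) hv.le) hΔnn]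
    by_cases hcase2 : Δ ≤ 4 * |x₁ - x₃|
    · have hS1' := S1_est hα hH0 hf2 hH hc1 hrep hx2 hx1 hx4 hx3
      have he : dq f f1 x₄ x₃ - dq f f1 x₂ x₃ - dq f f1 x₄ x₁ + dq f f1 x₂ x₁
          = S := by
        rw [dq_symm f f1 x₄ x₃, dq_symm f f1 x₂ x₃, dq_symm f f1 x₄ x₁,
          dq_symm f f1 x₂ x₁, hSdef, h34, h14, h32, h12]
        ring
      rw [he] at hS1'
      have huα : |x₁ - x₃| ^ (α : ℝ) ≤ 4 * Δ ^ (α - 1 : ℝ) * |x₁ - x₃| := by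
        have e : |x₁ - x₃| ^ (α : ℝ) = |x₁ - x₃| ^ (α - 1 : ℝ) * |x₁ - x₃| := by
          rw [show (α : ℝ) = (α - 1) + 1 by ring, Real.rpow_add hu, Real.rpow_one]
          norm_num
        have h2 : |x₁ - x₃| ^ (α - 1 : ℝ) ≤ (Δ / 4) ^ (α - 1 : ℝ) :=
          Real.rpow_le_rpow_of_nonpos (by linarith) (by linarith) (by linarith)
        have h3 := hdiv 4 (by norm_num)
        rw [e]
        have := le_trans h2 h3
        nlinarith [hu.le]
      calc |S| ≤ H * |x₂ - x₄| * |x₁ - x₃| ^ (α : ℝ) := hS1'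
        _ ≤ H * |x₂ - x₄| * (4 * Δ ^ (α - 1 : ℝ) * |x₁ - x₃|) :=
            mul_le_mul_of_nonneg_left huα (by positivity)
        _ ≤ 6 * H * |x₁ - x₃| * |x₂ - x₄| * Δ ^ (α - 1 : ℝ) := by
            nlinarith [mul_nonneg (mul_nonneg (mul_nonneg hH0 hu.le) hv.le) hΔnn]
    · push_neg at hcase1 hcase2
      have hsep : ∀ w ∈ uIcc x₁ x₃, ∀ t ∈ uIcc x₂ x₄, Δ / 2 ≤ |w - t| := by
        intro w hw t ht
        have hw1' : |w - x₁| ≤ |x₁ - x₃| := by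
          rw [abs_sub_comm x₁ x₃]
          exact abs_sub_le_of_uIcc hw
        have hw3' : |w - x₃| ≤ |x₁ - x₃| :=
          abs_sub_le_of_uIcc (Set.uIcc_comm x₁ x₃ ▸ hw)
        have hw1 : |x₁ - w| ≤ |x₁ - x₃| := by rw [abs_sub_comm x₁ w]; exact hw1'
        have hw3 : |x₃ - w| ≤ |x₁ - x₃| := by rw [abs_sub_comm x₃ w]; exact hw3'
        have ht2' : |t - x₂| ≤ |x₂ - x₄| := by
          rw [abs_sub_comm x₂ x₄]
          exact abs_sub_le_of_uIcc ht
        have ht4' : |t - x₄| ≤ |x₂ - x₄| :=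
          abs_sub_le_of_uIcc (Set.uIcc_comm x₂ x₄ ▸ ht)
        have ht2 : |x₂ - t| ≤ |x₂ - x₄| := by rw [abs_sub_comm x₂ t]; exact ht2'
        have ht4 : |x₄ - t| ≤ |x₂ - x₄| := by rw [abs_sub_comm x₄ t]; exact ht4'
        have tri : ∀ p q : ℝ, |p - q| ≤ |p - w| + |w - t| + |t - q| := by
          intro p q
          calc |p - q| ≤ |p - w| + |w - q| := abs_sub_le _ _ _
            _ ≤ |p - w| + (|w - t| + |t - q|) := by linarith [abs_sub_le w t q]
            _ = |p - w| + |w - t| + |t - q| := by ring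
        have tri2 : ∀ p q : ℝ, |p - q| ≤ |p - t| + |w - t| + |w - q| := by
          intro p q
          calc |p - q| ≤ |p - t| + |t - q| := abs_sub_le _ _ _
            _ ≤ |p - t| + (|t - w| + |w - q|) := by linarith [abs_sub_le t w q]
            _ = |p - t| + |w - t| + |w - q| := by rw [abs_sub_comm t w]; ring
        have hdiam : Δ ≤ |x₁ - x₃| + |x₂ - x₄| + |w - t| := by
          rw [hΔdef]
          apply Metric.diam_le_of_forall_dist_le (by positivity)
          intro p hp q hq
          simp only [Set.mem_insert_iff, Set.mem_singleton_iff] at hp hq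
          rw [Real.dist_eq]
          rcases hp with rfl | rfl | rfl | rfl <;> rcases hq with rfl | rfl | rfl | rfl <;>
            first
            | (simp only [sub_self, abs_zero]; positivity)
            | linarith [tri p q, tri2 p q, abs_sub_comm p q, abs_nonneg (w - t),
                hw1, hw1', hw3, hw3', ht2, ht2', ht4, ht4', hu.le, hv.le]
        linarith
      have hS2 := S2_est hα hH0 hf1 hf2 hH hx1 hx2 hx3 hx4
        (by linarith : (0:ℝ) < Δ / 2) hsep
      have h3 := hdiv 2 (by norm_num)
      calc |S| ≤ 3 * H * (Δ / 2) ^ (α - 1 : ℝ) * |x₁ - x₃| * |x₂ - x₄| := hS2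
        _ ≤ 3 * H * (2 * Δ ^ (α - 1 : ℝ)) * |x₁ - x₃| * |x₂ - x₄| := by
            apply mul_le_mul_of_nonneg_right _ hv.le
            apply mul_le_mul_of_nonneg_right _ hu.le
            exact mul_le_mul_of_nonneg_left h3 (by positivity)
        _ = 6 * H * |x₁ - x₃| * |x₂ - x₄| * Δ ^ (α - 1 : ℝ) := by ring
  -- Lipschitz differences
  have hlip1 : |d12 - d32| ≤ M2 * |x₁ - x₃| := by
    rw [h12, h32, dq_symm f f1 x₁ x₂, dq_symm f f1 x₃ x₂]
    exact dq_lip hf2 hM2 hc1 hrep hx2 hx1 hx3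
  have hlip2 : |d12 - d14| ≤ M2 * |x₂ - x₄| := by
    rw [h12, h14]
    exact dq_lip hf2 hM2 hc1 hrep hx1 hx2 hx4
  -- numerator bound
  have hnum : |d12 * S - (d12 - d32) * (d12 - d14)|
      ≤ M * |S| + (M2 * |x₁ - x₃|) * (M2 * |x₂ - x₄|) := by
    calc |d12 * S - (d12 - d32) * (d12 - d14)|
        ≤ |d12 * S| + |(d12 - d32) * (d12 - d14)| := abs_sub _ _
      _ = |d12| * |S| + |d12 - d32| * |d12 - d14| := by rw [abs_mul, abs_mul]
      _ ≤ M * |S| + (M2 * |x₁ - x₃|) * (M2 * |x₂ - x₄|) := by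
          apply add_le_add
          · exact mul_le_mul_of_nonneg_right (hdqM x₁ hx1 x₂ hx2) (abs_nonneg _)
          · exact mul_le_mul hlip1 hlip2 (abs_nonneg _) (by positivity)
  -- assemble
  rw [hkey, abs_div, abs_mul]
  have hden : m * m ≤ |d32| * |d14| :=
    mul_le_mul (hdqm x₃ hx3 x₂ hx2) (hdqm x₁ hx1 x₄ hx4) hm0.le
      (le_trans hm0.le (hdqm x₃ hx3 x₂ hx2))
  have hmm : (0:ℝ) < m * m := by positivity
  calc |d12 * S - (d12 - d32) * (d12 - d14)| / (|d32| * |d14|)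
      ≤ |d12 * S - (d12 - d32) * (d12 - d14)| / (m * m) :=
        div_le_div_of_nonneg_left (abs_nonneg _) hmm hden
    _ ≤ (M * |S| + (M2 * |x₁ - x₃|) * (M2 * |x₂ - x₄|)) / (m * m) :=
        (div_le_div_iff_of_pos_right hmm).mpr hnum
    _ ≤ ((6 * M * H + M2 ^ 2 * (B - A) ^ (1 - α : ℝ) + 1)
          * (|x₁ - x₃| * |x₂ - x₄| * Δ ^ (α - 1 : ℝ))) / (m * m) := by
        apply (div_le_div_iff_of_pos_right hmm).mpr
        have huvΔ : (0:ℝ) ≤ |x₁ - x₃| * |x₂ - x₄| * Δ ^ (α - 1 : ℝ) := by positivity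
        have p1 : M * |S| ≤ 6 * M * H * (|x₁ - x₃| * |x₂ - x₄| * Δ ^ (α - 1 : ℝ)) := by
          have := mul_le_mul_of_nonneg_left hSbound hMnn
          nlinarith [this]
        have h1le : (1:ℝ) ≤ (B - A) ^ (1 - α : ℝ) * Δ ^ (α - 1 : ℝ) := by
          have e : (B - A) ^ (1 - α : ℝ) * (B - A) ^ (α - 1 : ℝ) = 1 := by
            rw [← Real.rpow_add hBA]
            norm_num
          calc (1:ℝ) = (B - A) ^ (1 - α : ℝ) * (B - A) ^ (α - 1 : ℝ) := e.symm
            _ ≤ (B - A) ^ (1 - α : ℝ) * Δ ^ (α - 1 : ℝ) :=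
              mul_le_mul_of_nonneg_left hΔ1 (Real.rpow_nonneg hBA.le _)
        have p2 : (M2 * |x₁ - x₃|) * (M2 * |x₂ - x₄|)
            ≤ M2 ^ 2 * (B - A) ^ (1 - α : ℝ) * (|x₁ - x₃| * |x₂ - x₄| * Δ ^ (α - 1 : ℝ)) := by
          have e2 : (M2 * |x₁ - x₃|) * (M2 * |x₂ - x₄|) = M2 ^ 2 * (|x₁ - x₃| * |x₂ - x₄|) := by
            ring
          rw [e2]
          calc M2 ^ 2 * (|x₁ - x₃| * |x₂ - x₄|)
              ≤ M2 ^ 2 * (|x₁ - x₃| * |x₂ - x₄|)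
                * ((B - A) ^ (1 - α : ℝ) * Δ ^ (α - 1 : ℝ)) :=
                le_mul_of_one_le_right (by positivity) h1le
            _ = M2 ^ 2 * (B - A) ^ (1 - α : ℝ)
                * (|x₁ - x₃| * |x₂ - x₄| * Δ ^ (α - 1 : ℝ)) := by ring
        nlinarith [p1, p2, huvΔ]
    _ = ((6 * M * H + M2 ^ 2 * (B - A) ^ (1 - α : ℝ) + 1) / (m * m)) * |x₁ - x₃|
        * |x₂ - x₄| * Δ ^ (α - 1 : ℝ) := by ring
end
end

section
/- Let A<B, γ∈(0,1], and let f:[A,B]→ℝ be four times continuously differentiable with f⁽⁴⁾ γ-Hölder continuous on [A,B] and with f'(x)≠0 for all x∈[A,B]. Then there exists a constant C>0, depending only on f, [A,B] and γ, such that for all x₁,x₂,θ∈[A,B] with x₁≠x₂ one has |(f(x₁)−f(x₂))/(f'(θ)·(x₁−x₂)) − 1 − P₁ − P₂ − P₃| ≤ C·(diam{x₁,x₂,θ})^{3+γ}, where P_k = φ_k·(d₁^{k+1}−d₂^{k+1})/(x₁−x₂) = φ_k·Σ_{j=0}^{k} d₁^{j} d₂^{k−j} for k=1,2,3. -/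
theorem taylor_ratio_expansion
    (A B γ : ℝ) (hAB : A < B) (hγ : γ ∈ Set.Ioc (0 : ℝ) 1)
    (f f1 f2 f3 f4 : ℝ → ℝ)
    (hf1 : ∀ x ∈ Set.Icc A B, HasDerivWithinAt f (f1 x) (Set.Icc A B) x)
    (hf2 : ∀ x ∈ Set.Icc A B, HasDerivWithinAt f1 (f2 x) (Set.Icc A B) x)
    (hf3 : ∀ x ∈ Set.Icc A B, HasDerivWithinAt f2 (f3 x) (Set.Icc A B) x)
    (hf4 : ∀ x ∈ Set.Icc A B, HasDerivWithinAt f3 (f4 x) (Set.Icc A B) x)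
    (H : ℝ)
    (hH : ∀ x ∈ Set.Icc A B, ∀ y ∈ Set.Icc A B, |f4 x - f4 y| ≤ H * |x - y| ^ γ)
    (hf1ne : ∀ x ∈ Set.Icc A B, f1 x ≠ 0) :
    ∃ C > 0, ∀ x₁ ∈ Set.Icc A B, ∀ x₂ ∈ Set.Icc A B, ∀ θ ∈ Set.Icc A B,
      x₁ ≠ x₂ →
      let φ₁ := f2 θ / (2 * f1 θ)
      let φ₂ := f3 θ / (6 * f1 θ)
      let φ₃ := f4 θ / (24 * f1 θ)
      let d₁ := x₁ - θ
      let d₂ := x₂ - θ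
      |(f x₁ - f x₂) / (f1 θ * (x₁ - x₂)) - 1 -
          φ₁ * (d₁ + d₂) - φ₂ * (d₁ ^ 2 + d₁ * d₂ + d₂ ^ 2) -
          φ₃ * (d₁ ^ 3 + d₁ ^ 2 * d₂ + d₁ * d₂ ^ 2 + d₂ ^ 3)| ≤
        C * Metric.diam ({x₁, x₂, θ} : Set ℝ) ^ (3 + γ) := by
  -- continuity of f1 on [A,B]
  have hf1cont : ContinuousOn f1 (Set.Icc A B) := fun x hx =>
    (hf2 x hx).differentiableWithinAt.continuousWithinAt
  -- minimum of |f1|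
  obtain ⟨z, hz, hzmin'⟩ := isCompact_Icc.exists_isMinOn (Set.nonempty_Icc.2 hAB.le)
    hf1cont.abs
  have hzmin : ∀ y ∈ Set.Icc A B, |f1 z| ≤ |f1 y| := fun y hy => hzmin' hy
  set m : ℝ := |f1 z| with hm_def
  have hm : 0 < m := abs_pos.2 (hf1ne z hz)
  -- H is nonnegative
  have hH0 : 0 ≤ H := by
    have hAm : A ∈ Set.Icc A B := ⟨le_refl A, hAB.le⟩
    have hBm : B ∈ Set.Icc A B := ⟨hAB.le, le_refl B⟩
    have h1 := hH A hAm B hBm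
    have hp : (0:ℝ) < |A - B| ^ γ :=
      Real.rpow_pos_of_pos (abs_pos.2 (sub_ne_zero.2 hAB.ne)) γ
    nlinarith [abs_nonneg (f4 A - f4 B)]
  refine ⟨(H + 1) / m, by positivity, ?_⟩
  intro x₁ hx₁ x₂ hx₂ θ hθ hne
  intro φ₁ φ₂ φ₃ d₁ d₂
  set D := Metric.diam ({x₁, x₂, θ} : Set ℝ) with hD_def
  have hSfin : ({x₁, x₂, θ} : Set ℝ).Finite := by
    exact (Set.finite_singleton θ).insert x₂ |>.insert x₁
  have hdist : ∀ a ∈ ({x₁, x₂, θ} : Set ℝ), ∀ b ∈ ({x₁, x₂, θ} : Set ℝ), |a - b| ≤ D := by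
    intro a ha b hb
    rw [← Real.dist_eq]
    exact Metric.dist_le_diam_of_mem hSfin.isBounded ha hb
  have hx₁S : x₁ ∈ ({x₁, x₂, θ} : Set ℝ) := by simp
  have hx₂S : x₂ ∈ ({x₁, x₂, θ} : Set ℝ) := by simp
  have hθS : θ ∈ ({x₁, x₂, θ} : Set ℝ) := by simp
  have hD0 : 0 < D := lt_of_lt_of_le (abs_pos.2 (sub_ne_zero.2 hne)) (hdist x₁ hx₁S x₂ hx₂S)
  -- the interval J
  set lo := min (min x₁ x₂) θ with hlo_def
  set hi := max (max x₁ x₂) θ with hhi_def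
  set J : Set ℝ := Set.Icc lo hi with hJ_def
  have hJsub : J ⊆ Set.Icc A B := by
    apply Set.Icc_subset_Icc
    · exact le_min (le_min hx₁.1 hx₂.1) hθ.1
    · exact max_le (max_le hx₁.2 hx₂.2) hθ.2
  have hx₁J : x₁ ∈ J := ⟨(min_le_left _ _).trans (min_le_left _ _), (le_max_left _ _).trans (le_max_left _ _)⟩
  have hx₂J : x₂ ∈ J := ⟨(min_le_left _ _).trans (min_le_right _ _), (le_max_right _ _).trans (le_max_left _ _)⟩
  have hθJ : θ ∈ J := ⟨min_le_right _ _, le_max_right _ _⟩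
  have hconv : Convex ℝ J := convex_Icc lo hi
  -- for x ∈ J, |x - θ| ≤ D
  have hxθD : ∀ x ∈ J, |x - θ| ≤ D := by
    intro x hx
    have hloS : lo ∈ ({x₁, x₂, θ} : Set ℝ) := by
      rcases min_choice (min x₁ x₂) θ with h | h <;> rw [hlo_def, h]
      · rcases min_choice x₁ x₂ with h' | h' <;> rw [h'] <;> simp
      · simp
    have hhiS : hi ∈ ({x₁, x₂, θ} : Set ℝ) := by
      rcases max_choice (max x₁ x₂) θ with h | h <;> rw [hhi_def, h]
      · rcases max_choice x₁ x₂ with h' | h' <;> rw [h'] <;> simp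
      · simp
    have h1 : hi - lo ≤ D := by
      have := hdist hi hhiS lo hloS
      rw [abs_of_nonneg (sub_nonneg.2 (hθJ.1.trans hθJ.2))] at this
      exact this
    have : |x - θ| ≤ hi - lo := by
      rw [abs_le]
      constructor <;> [nlinarith [hx.1, hθJ.2]; nlinarith [hx.2, hθJ.1]]
    linarith
  have hγ0 : 0 < γ := hγ.1
  -- Hölder bound on J
  have b3 : ∀ x ∈ J, ‖f4 x - f4 θ‖ ≤ H * D ^ γ := by
    intro x hx
    rw [Real.norm_eq_abs]
    calc |f4 x - f4 θ| ≤ H * |x - θ| ^ γ := hH x (hJsub hx) θ hθ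
      _ ≤ H * D ^ γ := by
          apply mul_le_mul_of_nonneg_left _ hH0
          exact Real.rpow_le_rpow (abs_nonneg _) (hxθD x hx) hγ0.le
  have hHD0 : 0 ≤ H * D ^ γ := by positivity
  -- level 2: g2 y = f3 y - f3 θ - f4 θ (y - θ)
  set g2 : ℝ → ℝ := fun y => f3 y - f3 θ - f4 θ * (y - θ) with hg2_def
  have h2 : ∀ x ∈ J, HasDerivWithinAt g2 (f4 x - f4 θ) J x := by
    intro x hx
    have := (((hf4 x (hJsub hx)).mono hJsub).sub_const (f3 θ)).sub
      (((hasDerivWithinAt_id x J).sub_const θ).const_mul (f4 θ))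
    exact this.congr_deriv (by ring)
  have m2 : ∀ x ∈ J, |g2 x| ≤ H * D ^ γ * D := by
    intro x hx
    have := hconv.norm_image_sub_le_of_norm_hasDerivWithin_le h2 b3 hθJ hx
    have hg2θ : g2 θ = 0 := by simp [hg2_def]
    rw [hg2θ, sub_zero, Real.norm_eq_abs, Real.norm_eq_abs] at this
    calc |g2 x| ≤ H * D ^ γ * |x - θ| := this
      _ ≤ H * D ^ γ * D := mul_le_mul_of_nonneg_left (hxθD x hx) hHD0
  -- level 1
  set g1 : ℝ → ℝ := fun y => f2 y - f2 θ - f3 θ * (y - θ) - f4 θ * (y - θ) ^ 2 / 2 with hg1_def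
  have h1 : ∀ x ∈ J, HasDerivWithinAt g1 (g2 x) J x := by
    intro x hx
    have := ((((hf3 x (hJsub hx)).mono hJsub).sub_const (f2 θ)).sub
      (((hasDerivWithinAt_id x J).sub_const θ).const_mul (f3 θ))).sub
      (((((hasDerivWithinAt_id x J).sub_const θ).pow 2).const_mul (f4 θ)).div_const 2)
    exact this.congr_deriv (by simp [hg2_def]; ring)
  have m1 : ∀ x ∈ J, |g1 x| ≤ H * D ^ γ * D * D := by
    intro x hx
    have := hconv.norm_image_sub_le_of_norm_hasDerivWithin_le h1
      (fun x hx => by rw [Real.norm_eq_abs]; exact m2 x hx) hθJ hx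
    have hg1θ : g1 θ = 0 := by simp [hg1_def]
    rw [hg1θ, sub_zero, Real.norm_eq_abs, Real.norm_eq_abs] at this
    calc |g1 x| ≤ H * D ^ γ * D * |x - θ| := this
      _ ≤ H * D ^ γ * D * D := mul_le_mul_of_nonneg_left (hxθD x hx) (by positivity)
  -- level 0
  set g0 : ℝ → ℝ := fun y => f1 y - f1 θ - f2 θ * (y - θ) - f3 θ * (y - θ) ^ 2 / 2
    - f4 θ * (y - θ) ^ 3 / 6 with hg0_def
  have h0 : ∀ x ∈ J, HasDerivWithinAt g0 (g1 x) J x := by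
    intro x hx
    have := (((((hf2 x (hJsub hx)).mono hJsub).sub_const (f1 θ)).sub
      (((hasDerivWithinAt_id x J).sub_const θ).const_mul (f2 θ))).sub
      (((((hasDerivWithinAt_id x J).sub_const θ).pow 2).const_mul (f3 θ)).div_const 2)).sub
      (((((hasDerivWithinAt_id x J).sub_const θ).pow 3).const_mul (f4 θ)).div_const 6)
    exact this.congr_deriv (by simp [hg1_def]; ring)
  have m0 : ∀ x ∈ J, |g0 x| ≤ H * D ^ γ * D * D * D := by
    intro x hx
    have := hconv.norm_image_sub_le_of_norm_hasDerivWithin_le h0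
      (fun x hx => by rw [Real.norm_eq_abs]; exact m1 x hx) hθJ hx
    have hg0θ : g0 θ = 0 := by simp [hg0_def]
    rw [hg0θ, sub_zero, Real.norm_eq_abs, Real.norm_eq_abs] at this
    calc |g0 x| ≤ H * D ^ γ * D * D * |x - θ| := this
      _ ≤ H * D ^ γ * D * D * D := mul_le_mul_of_nonneg_left (hxθD x hx) (by positivity)
  -- remainder
  set R : ℝ → ℝ := fun y => f y - (f θ + f1 θ * (y - θ) + f2 θ * (y - θ) ^ 2 / 2
    + f3 θ * (y - θ) ^ 3 / 6 + f4 θ * (y - θ) ^ 4 / 24) with hR_def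
  have hR : ∀ x ∈ J, HasDerivWithinAt R (g0 x) J x := by
    intro x hx
    have := ((hf1 x (hJsub hx)).mono hJsub).sub
      (((((hasDerivWithinAt_const x J (f θ)).add
        (((hasDerivWithinAt_id x J).sub_const θ).const_mul (f1 θ))).add
        (((((hasDerivWithinAt_id x J).sub_const θ).pow 2).const_mul (f2 θ)).div_const 2)).add
        (((((hasDerivWithinAt_id x J).sub_const θ).pow 3).const_mul (f3 θ)).div_const 6)).add
        (((((hasDerivWithinAt_id x J).sub_const θ).pow 4).const_mul (f4 θ)).div_const 24))
    exact this.congr_deriv (by simp [hg0_def]; ring)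
  have key : |R x₁ - R x₂| ≤ H * D ^ γ * D * D * D * |x₁ - x₂| := by
    have := hconv.norm_image_sub_le_of_norm_hasDerivWithin_le hR
      (fun x hx => by rw [Real.norm_eq_abs]; exact m0 x hx) hx₂J hx₁J
    rw [Real.norm_eq_abs, Real.norm_eq_abs] at this
    exact this
  -- algebra : the expression equals (R x₁ - R x₂) / (f1 θ * (x₁ - x₂))
  have hf1θ : f1 θ ≠ 0 := hf1ne θ hθ
  have hΔ : x₁ - x₂ ≠ 0 := sub_ne_zero.2 hne
  have hEq : (f x₁ - f x₂) / (f1 θ * (x₁ - x₂)) - 1 -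
      φ₁ * (d₁ + d₂) - φ₂ * (d₁ ^ 2 + d₁ * d₂ + d₂ ^ 2) -
      φ₃ * (d₁ ^ 3 + d₁ ^ 2 * d₂ + d₁ * d₂ ^ 2 + d₂ ^ 3)
      = (R x₁ - R x₂) / (f1 θ * (x₁ - x₂)) := by
    simp only [hR_def, φ₁, φ₂, φ₃, d₁, d₂]
    field_simp
    ring
  rw [hEq]
  have hmθ : m ≤ |f1 θ| := hzmin θ hθ
  have hrw : D ^ (3 + γ) = D ^ γ * D * D * D := by
    rw [add_comm, Real.rpow_add hD0]
    have : D ^ (3:ℝ) = D * D * D := by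
      rw [show (3:ℝ) = ((3:ℕ):ℝ) by norm_num, Real.rpow_natCast]
      ring
    rw [this]
    ring
  calc |(R x₁ - R x₂) / (f1 θ * (x₁ - x₂))|
      = |R x₁ - R x₂| / (|f1 θ| * |x₁ - x₂|) := by rw [abs_div, abs_mul]
    _ ≤ (H * D ^ γ * D * D * D * |x₁ - x₂|) / (m * |x₁ - x₂|) := by
        apply div_le_div₀ (by positivity) key (by positivity)
        exact mul_le_mul_of_nonneg_right hmθ (abs_nonneg _)
    _ = H / m * D ^ (3 + γ) := by
        rw [hrw]
        field_simp
    _ ≤ (H + 1) / m * D ^ (3 + γ) := by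
        gcongr
        linarith
end

section
/- Let A<B, γ∈(0,1], and let f:[A,B]→ℝ be four times continuously differentiable with f⁽⁴⁾ γ-Hölder continuous on [A,B] and with f'(x)≠0 for all x∈[A,B]. Write φ_k = f^{(k+1)}(θ)/((k+1)!·f'(θ)) and φ̃_k = f^{(k+1)}(θ̃)/((k+1)!·f'(θ̃)). Then there exists a constant C>0, depending only on f, [A,B] and γ, such that for all θ,θ̃∈[A,B], writing δ = θ̃−θ, one has |φ̃₁ − φ₁ − (3φ₂−2φ₁²)·δ − (6φ₃−9φ₂φ₁+4φ₁³)·δ²| ≤ C·|δ|^{2+γ}. -/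
open Set

private lemma le_max_mul_rpow {t D γ : ℝ} (ht : 0 ≤ t) (htD : t ≤ D)
    (hγ0 : 0 < γ) (hγ1 : γ ≤ 1) : t ≤ max D 1 * t ^ γ := by
  rcases eq_or_lt_of_le ht with h0 | h0
  · simp [← h0, Real.zero_rpow (ne_of_gt hγ0)]
  rcases le_or_gt t 1 with h1 | h1
  · calc t = t ^ (1 : ℝ) := (Real.rpow_one t).symm
      _ ≤ t ^ γ := Real.rpow_le_rpow_of_exponent_ge h0 h1 hγ1
      _ = 1 * t ^ γ := (one_mul _).symm
      _ ≤ max D 1 * t ^ γ :=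
        mul_le_mul_of_nonneg_right (le_max_right _ _) (Real.rpow_nonneg ht _)
  · have h2 : (1 : ℝ) ≤ t ^ γ := by
      calc (1 : ℝ) = 1 ^ γ := (Real.one_rpow γ).symm
        _ ≤ t ^ γ := Real.rpow_le_rpow zero_le_one h1.le hγ0.le
    calc t ≤ D := htD
      _ = D * 1 := (mul_one D).symm
      _ ≤ max D 1 * t ^ γ :=
        mul_le_mul (le_max_left _ _) h2 zero_le_one
          (le_trans (le_trans ht htD) (le_max_left D 1))

/-- Bounded and Hölder on `s` with exponent `γ`. -/
private def NiceOn (s : Set ℝ) (γ : ℝ) (h : ℝ → ℝ) : Prop :=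
  ∃ K M : ℝ, 0 ≤ K ∧ 0 ≤ M ∧ (∀ x ∈ s, |h x| ≤ M) ∧
    ∀ x ∈ s, ∀ y ∈ s, |h x - h y| ≤ K * |x - y| ^ γ

private lemma NiceOn.add {s : Set ℝ} {γ : ℝ} {h k : ℝ → ℝ}
    (hh : NiceOn s γ h) (hk : NiceOn s γ k) :
    NiceOn s γ (fun x => h x + k x) := by
  obtain ⟨K1, M1, hK1, hM1, hb1, hh1⟩ := hh
  obtain ⟨K2, M2, hK2, hM2, hb2, hh2⟩ := hk
  refine ⟨K1 + K2, M1 + M2, by linarith, by linarith, ?_, ?_⟩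
  · intro x hx
    calc |h x + k x| ≤ |h x| + |k x| := abs_add_le _ _
      _ ≤ M1 + M2 := add_le_add (hb1 x hx) (hb2 x hx)
  · intro x hx y hy
    calc |h x + k x - (h y + k y)| = |(h x - h y) + (k x - k y)| := by ring_nf
      _ ≤ |h x - h y| + |k x - k y| := abs_add_le _ _
      _ ≤ K1 * |x - y| ^ γ + K2 * |x - y| ^ γ :=
        add_le_add (hh1 x hx y hy) (hh2 x hx y hy)
      _ = (K1 + K2) * |x - y| ^ γ := by ring

private lemma NiceOn.mul {s : Set ℝ} {γ : ℝ} {h k : ℝ → ℝ}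
    (hh : NiceOn s γ h) (hk : NiceOn s γ k) :
    NiceOn s γ (fun x => h x * k x) := by
  obtain ⟨K1, M1, hK1, hM1, hb1, hh1⟩ := hh
  obtain ⟨K2, M2, hK2, hM2, hb2, hh2⟩ := hk
  refine ⟨M1 * K2 + M2 * K1, M1 * M2, by positivity, by positivity, ?_, ?_⟩
  · intro x hx
    rw [abs_mul]
    exact mul_le_mul (hb1 x hx) (hb2 x hx) (abs_nonneg _) hM1
  · intro x hx y hy
    have key : h x * k x - h y * k y = h x * (k x - k y) + k y * (h x - h y) := by ring
    calc |h x * k x - h y * k y|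
        ≤ |h x * (k x - k y)| + |k y * (h x - h y)| := by rw [key]; exact abs_add_le _ _
      _ = |h x| * |k x - k y| + |k y| * |h x - h y| := by rw [abs_mul, abs_mul]
      _ ≤ M1 * (K2 * |x - y| ^ γ) + M2 * (K1 * |x - y| ^ γ) :=
          add_le_add
            (mul_le_mul (hb1 x hx) (hh2 x hx y hy) (abs_nonneg _) hM1)
            (mul_le_mul (hb2 y hy) (hh1 x hx y hy) (abs_nonneg _) hM2)
      _ = (M1 * K2 + M2 * K1) * |x - y| ^ γ := by ring

private lemma NiceOn.const (s : Set ℝ) (γ : ℝ) (c : ℝ) :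
    NiceOn s γ (fun _ => c) := by
  refine ⟨0, |c|, le_rfl, abs_nonneg _, fun x _ => le_rfl, fun x _ y _ => by simp⟩

/-- Bounded Lipschitz functions on a bounded set are Hölder of any exponent `γ ∈ (0,1]`. -/
private lemma NiceOn.of_lip {A B γ : ℝ} {h : ℝ → ℝ} {L M : ℝ}
    (hγ0 : 0 < γ) (hγ1 : γ ≤ 1) (hL : 0 ≤ L)
    (hb : ∀ x ∈ Icc A B, |h x| ≤ M)
    (hlip : ∀ x ∈ Icc A B, ∀ y ∈ Icc A B, |h x - h y| ≤ L * |x - y|) :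
    NiceOn (Icc A B) γ h := by
  refine ⟨L * max (B - A) 1, max M 0, by positivity, le_max_right _ _,
    fun x hx => (hb x hx).trans (le_max_left _ _), ?_⟩
  intro x hx y hy
  have hxy : |x - y| ≤ B - A := by
    rw [abs_sub_le_iff]
    constructor <;> [skip; skip] <;>
      · obtain ⟨h1, h2⟩ := hx; obtain ⟨h3, h4⟩ := hy; linarith
  calc |h x - h y| ≤ L * |x - y| := hlip x hx y hy
    _ ≤ L * (max (B - A) 1 * |x - y| ^ γ) :=
      mul_le_mul_of_nonneg_left (le_max_mul_rpow (abs_nonneg _) hxy hγ0 hγ1) hL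
    _ = L * max (B - A) 1 * |x - y| ^ γ := by ring

private lemma taylor2_holder {A B γ K : ℝ} {g g1 g2 : ℝ → ℝ}
    (hg : ∀ x ∈ Icc A B, HasDerivWithinAt g (g1 x) (Icc A B) x)
    (hg1 : ∀ x ∈ Icc A B, HasDerivWithinAt g1 (g2 x) (Icc A B) x)
    (hγ0 : 0 < γ) (hK : 0 ≤ K)
    (hHo : ∀ x ∈ Icc A B, ∀ y ∈ Icc A B, |g2 x - g2 y| ≤ K * |x - y| ^ γ)
    {θ θ' : ℝ} (hθ : θ ∈ Icc A B) (hθ' : θ' ∈ Icc A B) :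
    |g θ' - g θ - g1 θ * (θ' - θ) - g2 θ / 2 * (θ' - θ) ^ 2| ≤
      K * |θ' - θ| ^ (2 + γ) := by
  by_cases hδ : θ' = θ
  · subst hδ
    simp [Real.zero_rpow (by positivity : (2 : ℝ) + γ ≠ 0)]
  have hδ0 : 0 < |θ' - θ| := abs_pos.2 (sub_ne_zero.2 hδ)
  set δ := θ' - θ with hδdef
  set u := uIcc θ θ' with hu
  have hus : u ⊆ Icc A B := uIcc_subset_Icc hθ hθ'
  have huconv : Convex ℝ u := by rw [hu, uIcc]; exact convex_Icc _ _
  have hθu : θ ∈ u := left_mem_uIcc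
  have hθ'u : θ' ∈ u := right_mem_uIcc
  have hmem : ∀ x ∈ u, |x - θ| ≤ |δ| := by
    intro x hx
    rcases mem_uIcc.1 hx with ⟨h1, h2⟩ | ⟨h1, h2⟩ <;>
      · rw [abs_sub_le_iff]
        have := le_abs_self δ; have := neg_abs_le δ
        constructor <;> simp only [hδdef] at * <;> linarith
  -- first derivative of the remainder
  set R1 := fun x => g1 x - g1 θ - g2 θ * (x - θ) with hR1
  have hR1d : ∀ x ∈ u, HasDerivWithinAt R1 (g2 x - g2 θ) u x := by
    intro x hx
    have h := ((hg1 x (hus hx)).mono hus).sub_const (g1 θ)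
    have h2 := (((hasDerivWithinAt_id x u).sub_const θ).const_mul (g2 θ))
    have := h.sub h2
    simpa [R1, Pi.sub_def] using this.congr_deriv (by first
      | (simp only [id_eq]; push_cast; ring)
      | (push_cast; ring)
      | ring)
  have hR1b : ∀ x ∈ u, ‖g2 x - g2 θ‖ ≤ K * |δ| ^ γ := by
    intro x hx
    rw [Real.norm_eq_abs]
    calc |g2 x - g2 θ| ≤ K * |x - θ| ^ γ := hHo x (hus hx) θ hθ
      _ ≤ K * |δ| ^ γ :=
        mul_le_mul_of_nonneg_left
          (Real.rpow_le_rpow (abs_nonneg _) (hmem x hx) hγ0.le) hK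
  have hR1bound : ∀ x ∈ u, ‖R1 x‖ ≤ K * |δ| ^ γ * |δ| := by
    intro x hx
    have h0 : R1 θ = 0 := by simp [R1]
    have := huconv.norm_image_sub_le_of_norm_hasDerivWithin_le hR1d hR1b hθu hx
    rw [h0, sub_zero] at this
    calc ‖R1 x‖ ≤ K * |δ| ^ γ * ‖x - θ‖ := this
      _ ≤ K * |δ| ^ γ * |δ| := by
          apply mul_le_mul_of_nonneg_left _ (by positivity)
          rw [Real.norm_eq_abs]; exact hmem x hx
  -- second application of the MVT
  set R := fun x => g x - g θ - g1 θ * (x - θ) - g2 θ / 2 * (x - θ) ^ 2 with hR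
  have hRd : ∀ x ∈ u, HasDerivWithinAt R (R1 x) u x := by
    intro x hx
    have h := ((hg x (hus hx)).mono hus).sub_const (g θ)
    have h2 := (((hasDerivWithinAt_id x u).sub_const θ).const_mul (g1 θ))
    have h3 := ((((hasDerivWithinAt_id x u).sub_const θ).pow 2).const_mul (g2 θ / 2))
    have := (h.sub h2).sub h3
    simpa [R, R1, Pi.sub_def] using this.congr_deriv (by first
      | (simp only [id_eq]; push_cast; ring)
      | (push_cast; ring)
      | ring)
  have := huconv.norm_image_sub_le_of_norm_hasDerivWithin_le hRd hR1bound hθu hθ'u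
  have hR0 : R θ = 0 := by simp [R]
  rw [hR0, sub_zero, Real.norm_eq_abs, Real.norm_eq_abs] at this
  have hpow : |δ| ^ ((2 : ℝ) + γ) = |δ| ^ γ * |δ| * |δ| := by
    rw [add_comm, Real.rpow_add hδ0]
    have : |δ| ^ (2 : ℝ) = |δ| ^ (2 : ℕ) := by
      rw [← Real.rpow_natCast]; norm_num
    rw [this]; ring
  calc |g θ' - g θ - g1 θ * δ - g2 θ / 2 * δ ^ 2| = |R θ'| := by rw [hR]
    _ ≤ K * |δ| ^ γ * |δ| * |δ| := this
    _ = K * |δ| ^ (2 + γ) := by rw [hpow]; ring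

set_option maxHeartbeats 1000000 in
theorem phi1_expansion
    (A B γ : ℝ) (hAB : A < B) (hγ : γ ∈ Set.Ioc (0 : ℝ) 1)
    (f f1 f2 f3 f4 : ℝ → ℝ)
    (hf1 : ∀ x ∈ Set.Icc A B, HasDerivWithinAt f (f1 x) (Set.Icc A B) x)
    (hf2 : ∀ x ∈ Set.Icc A B, HasDerivWithinAt f1 (f2 x) (Set.Icc A B) x)
    (hf3 : ∀ x ∈ Set.Icc A B, HasDerivWithinAt f2 (f3 x) (Set.Icc A B) x)
    (hf4 : ∀ x ∈ Set.Icc A B, HasDerivWithinAt f3 (f4 x) (Set.Icc A B) x)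
    (H : ℝ)
    (hH : ∀ x ∈ Set.Icc A B, ∀ y ∈ Set.Icc A B, |f4 x - f4 y| ≤ H * |x - y| ^ γ)
    (hf1ne : ∀ x ∈ Set.Icc A B, f1 x ≠ 0) :
    ∃ C > 0, ∀ θ ∈ Set.Icc A B, ∀ θ' ∈ Set.Icc A B,
      let φ₁ := f2 θ / (2 * f1 θ)
      let φ₂ := f3 θ / (6 * f1 θ)
      let φ₃ := f4 θ / (24 * f1 θ)
      let φ₁' := f2 θ' / (2 * f1 θ')
      let δ := θ' - θ
      |φ₁' - φ₁ - (3 * φ₂ - 2 * φ₁ ^ 2) * δ -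
          (6 * φ₃ - 9 * φ₂ * φ₁ + 4 * φ₁ ^ 3) * δ ^ 2| ≤
        C * |δ| ^ (2 + γ) := by
  obtain ⟨hγ0, hγ1⟩ := hγ
  set s := Set.Icc A B with hs
  have hcomp : IsCompact s := isCompact_Icc
  have hne : s.Nonempty := nonempty_Icc.2 hAB.le
  have hconv : Convex ℝ s := convex_Icc A B
  -- continuity
  have hc1 : ContinuousOn f1 s := fun x hx => (hf2 x hx).continuousWithinAt
  have hc2 : ContinuousOn f2 s := fun x hx => (hf3 x hx).continuousWithinAt
  have hc3 : ContinuousOn f3 s := fun x hx => (hf4 x hx).continuousWithinAt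
  -- lower bound on |f1|
  obtain ⟨x₀, hx₀, hmin⟩ := hcomp.exists_isMinOn hne (hc1.abs)
  set m := |f1 x₀| with hm
  have hm0 : 0 < m := abs_pos.2 (hf1ne x₀ hx₀)
  have hmle : ∀ x ∈ s, m ≤ |f1 x| := fun x hx => hmin hx
  -- upper bounds
  obtain ⟨M1, hM1⟩ := hcomp.exists_bound_of_continuousOn hc1
  obtain ⟨M2, hM2⟩ := hcomp.exists_bound_of_continuousOn hc2
  obtain ⟨M3, hM3⟩ := hcomp.exists_bound_of_continuousOn hc3
  simp only [Real.norm_eq_abs] at hM1 hM2 hM3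
  have hM2' : 0 ≤ M2 := le_trans (abs_nonneg _) (hM2 _ hx₀)
  have hM3' : 0 ≤ M3 := le_trans (abs_nonneg _) (hM3 _ hx₀)
  -- H ≥ 0
  have hH0 : 0 ≤ H := by
    have h1 := hH A (left_mem_Icc.2 hAB.le) B (right_mem_Icc.2 hAB.le)
    have h2 : (0 : ℝ) < |A - B| ^ γ := by
      apply Real.rpow_pos_of_pos (abs_pos.2 (by linarith))
    nlinarith [abs_nonneg (f4 A - f4 B)]
  -- f4 bounded
  have hM4 : ∀ x ∈ s, |f4 x| ≤ |f4 x₀| + H * (max (B - A) 1) ^ γ := by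
    intro x hx
    have h1 := hH x hx x₀ hx₀
    have hxy : |x - x₀| ≤ max (B - A) 1 := by
      rw [abs_sub_le_iff]
      obtain ⟨a1, a2⟩ := hx; obtain ⟨b1, b2⟩ := hx₀
      constructor <;> [skip; skip] <;>
        · have := le_max_left (B - A) 1; linarith
    have h2 : |x - x₀| ^ γ ≤ (max (B - A) 1) ^ γ :=
      Real.rpow_le_rpow (abs_nonneg _) hxy hγ0.le
    have h3 : |f4 x| ≤ |f4 x - f4 x₀| + |f4 x₀| := by
      calc |f4 x| = |(f4 x - f4 x₀) + f4 x₀| := by ring_nf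
        _ ≤ |f4 x - f4 x₀| + |f4 x₀| := abs_add_le _ _
    have h4 : H * |x - x₀| ^ γ ≤ H * (max (B - A) 1) ^ γ :=
      mul_le_mul_of_nonneg_left h2 hH0
    linarith
  -- Lipschitz bounds from bounded derivatives
  have lipOf : ∀ (h h' : ℝ → ℝ) (L : ℝ),
      (∀ x ∈ s, HasDerivWithinAt h (h' x) s x) → (∀ x ∈ s, |h' x| ≤ L) →
      ∀ x ∈ s, ∀ y ∈ s, |h x - h y| ≤ L * |x - y| := by
    intro h h' L hd hb x hx y hy
    have := hconv.norm_image_sub_le_of_norm_hasDerivWithin_le hd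
      (fun z hz => by rw [Real.norm_eq_abs]; exact hb z hz) hy hx
    simpa [Real.norm_eq_abs] using this
  -- NiceOn facts
  have n2 : NiceOn s γ f2 :=
    NiceOn.of_lip hγ0 hγ1 hM3' (fun x hx => hM2 x hx) (lipOf f2 f3 M3 hf3 hM3)
  have hM4' : 0 ≤ M3 * M2 / (m * m) := by positivity
  have n3 : NiceOn s γ f3 := by
    obtain ⟨M4', hM4'b⟩ : ∃ M', ∀ x ∈ s, |f4 x| ≤ M' :=
      ⟨|f4 x₀| + H * (max (B - A) 1) ^ γ, hM4⟩
    have hM4'0 : 0 ≤ M4' := le_trans (abs_nonneg _) (hM4'b x₀ hx₀)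
    exact NiceOn.of_lip hγ0 hγ1 hM4'0 (fun x hx => hM3 x hx) (lipOf f3 f4 M4' hf4 hM4'b)
  have n4 : NiceOn s γ f4 := by
    refine ⟨max H 0, |f4 x₀| + H * (max (B - A) 1) ^ γ, le_max_right _ _, ?_, hM4, ?_⟩
    · have : (0:ℝ) ≤ H * (max (B - A) 1) ^ γ := by positivity
      have := abs_nonneg (f4 x₀); linarith
    · intro x hx y hy
      calc |f4 x - f4 y| ≤ H * |x - y| ^ γ := hH x hx y hy
        _ ≤ max H 0 * |x - y| ^ γ :=
          mul_le_mul_of_nonneg_right (le_max_left _ _) (Real.rpow_nonneg (abs_nonneg _) _)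
  -- inverse of f1 is Nice
  have nv : NiceOn s γ (fun x => (f1 x)⁻¹) := by
    apply NiceOn.of_lip hγ0 hγ1 (by positivity : (0:ℝ) ≤ M2 / (m * m))
      (M := m⁻¹)
    · intro x hx
      rw [abs_inv]
      exact inv_anti₀ hm0 (hmle x hx)
    · intro x hx y hy
      have hx0 : f1 x ≠ 0 := hf1ne x hx
      have hy0 : f1 y ≠ 0 := hf1ne y hy
      have key : (f1 x)⁻¹ - (f1 y)⁻¹ = (f1 y - f1 x) / (f1 x * f1 y) := by
        field_simp
      rw [key, abs_div, abs_mul]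
      have h1 : |f1 y - f1 x| ≤ M2 * |y - x| := lipOf f1 f2 M2 hf2 hM2 y hy x hx
      have h2 : m * m ≤ |f1 x| * |f1 y| :=
        mul_le_mul (hmle x hx) (hmle y hy) hm0.le (abs_nonneg _)
      have h3 : 0 < |f1 x| * |f1 y| := lt_of_lt_of_le (by positivity) h2
      rw [div_le_iff₀ h3]
      have hyx : |y - x| = |x - y| := abs_sub_comm y x
      calc |f1 y - f1 x| ≤ M2 * |x - y| := by rw [← hyx]; exact h1
        _ = M2 / (m * m) * |x - y| * (m * m) := by field_simp
        _ ≤ M2 / (m * m) * |x - y| * (|f1 x| * |f1 y|) :=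
            mul_le_mul_of_nonneg_left h2 (by positivity)
  -- the function g and its derivatives
  set g : ℝ → ℝ := fun x => f2 x / (2 * f1 x) with hgdef
  set g1 : ℝ → ℝ := fun x => f3 x / (2 * f1 x) - f2 x ^ 2 / (2 * f1 x ^ 2) with hg1def
  set g2 : ℝ → ℝ := fun x =>
    f4 x * (f1 x)⁻¹ * (1 / 2) - f2 x * f3 x * ((f1 x)⁻¹ * (f1 x)⁻¹) * (3 / 2) +
      f2 x * f2 x * f2 x * ((f1 x)⁻¹ * (f1 x)⁻¹ * (f1 x)⁻¹) with hg2def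
  have hgd : ∀ x ∈ s, HasDerivWithinAt g (g1 x) s x := by
    intro x hx
    have h1 : f1 x ≠ 0 := hf1ne x hx
    have h2 : (2 : ℝ) * f1 x ≠ 0 := by simp [h1]
    have := (hf3 x hx).div ((hf2 x hx).const_mul 2) h2
    apply this.congr_deriv
    rw [hg1def]
    field_simp
  have hg1d : ∀ x ∈ s, HasDerivWithinAt g1 (g2 x) s x := by
    intro x hx
    have h1 : f1 x ≠ 0 := hf1ne x hx
    have h2 : (2 : ℝ) * f1 x ≠ 0 := by simp [h1]
    have h3 : (2 : ℝ) * f1 x ^ 2 ≠ 0 := by simp [h1]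
    have d1 := (hf4 x hx).div ((hf2 x hx).const_mul 2) h2
    have d2 := ((hf3 x hx).pow 2).div (((hf2 x hx).pow 2).const_mul 2) h3
    have := d1.sub d2
    apply this.congr_deriv
    rw [hg2def]
    simp only [Pi.pow_apply]
    field_simp
    ring
  -- g2 is Hölder
  have ng2 : NiceOn s γ g2 := by
    have t1 : NiceOn s γ (fun x => f4 x * (f1 x)⁻¹ * (1 / 2)) :=
      (n4.mul nv).mul (NiceOn.const s γ (1 / 2))
    have t2 : NiceOn s γ
        (fun x => f2 x * f3 x * ((f1 x)⁻¹ * (f1 x)⁻¹) * (-(3 / 2))) :=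
      ((n2.mul n3).mul (nv.mul nv)).mul (NiceOn.const s γ (-(3 / 2)))
    have t3 : NiceOn s γ
        (fun x => f2 x * f2 x * f2 x * ((f1 x)⁻¹ * ((f1 x)⁻¹ * (f1 x)⁻¹))) :=
      ((n2.mul n2).mul n2).mul (nv.mul (nv.mul nv))
    have := (t1.add t2).add t3
    obtain ⟨K, M, hK, hM, hb, hhol⟩ := this
    have ex : ∀ z, (f4 z * (f1 z)⁻¹ * (1 / 2) +
        f2 z * f3 z * ((f1 z)⁻¹ * (f1 z)⁻¹) * (-(3 / 2)) +
        f2 z * f2 z * f2 z * ((f1 z)⁻¹ * ((f1 z)⁻¹ * (f1 z)⁻¹))) = g2 z := by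
      intro z; rw [hg2def]; ring
    refine ⟨K, M, hK, hM, ?_, ?_⟩
    · intro x hx
      have h := hb x hx
      beta_reduce at h
      rwa [ex x] at h
    · intro x hx y hy
      have h := hhol x hx y hy
      beta_reduce at h
      rwa [ex x, ex y] at h
  obtain ⟨K, M, hK, hM, _, hhol⟩ := ng2
  -- apply the Taylor lemma
  refine ⟨max K 1, lt_of_lt_of_le one_pos (le_max_right _ _), ?_⟩
  intro θ hθ θ' hθ'
  have h1θ : f1 θ ≠ 0 := hf1ne θ hθ
  have h1θ' : f1 θ' ≠ 0 := hf1ne θ' hθ'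
  have key := taylor2_holder hgd hg1d hγ0 hK hhol hθ hθ'
  show |f2 θ' / (2 * f1 θ') - f2 θ / (2 * f1 θ) -
      (3 * (f3 θ / (6 * f1 θ)) - 2 * (f2 θ / (2 * f1 θ)) ^ 2) * (θ' - θ) -
      (6 * (f4 θ / (24 * f1 θ)) - 9 * (f3 θ / (6 * f1 θ)) * (f2 θ / (2 * f1 θ)) +
        4 * (f2 θ / (2 * f1 θ)) ^ 3) * (θ' - θ) ^ 2| ≤
    max K 1 * |θ' - θ| ^ (2 + γ)
  have e : f2 θ' / (2 * f1 θ') - f2 θ / (2 * f1 θ) -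
      (3 * (f3 θ / (6 * f1 θ)) - 2 * (f2 θ / (2 * f1 θ)) ^ 2) * (θ' - θ) -
      (6 * (f4 θ / (24 * f1 θ)) - 9 * (f3 θ / (6 * f1 θ)) * (f2 θ / (2 * f1 θ)) +
        4 * (f2 θ / (2 * f1 θ)) ^ 3) * (θ' - θ) ^ 2 =
      g θ' - g θ - g1 θ * (θ' - θ) - g2 θ / 2 * (θ' - θ) ^ 2 := by
    simp only [hgdef, hg1def, hg2def]
    field_simp
    ring
  rw [e]
  calc _ ≤ K * |θ' - θ| ^ (2 + γ) := key
    _ ≤ max K 1 * |θ' - θ| ^ (2 + γ) :=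
      mul_le_mul_of_nonneg_right (le_max_left _ _)
        (Real.rpow_nonneg (abs_nonneg _) _)
end

section
/- Let f be four times differentiable in a neighbourhood of θ∈ℝ with f'(θ)≠0 and f' nonvanishing near θ, and set φ_k = f^{(k+1)}(θ)/((k+1)!·f'(θ)) for k=1,2,3. Then φ₂ − φ₁² = (1/6)·Sf(θ), and φ₃ − 2φ₂φ₁ + φ₁³ = (1/24)·(Sf)'(θ), where (Sf)' denotes the derivative of the Schwarzian derivative of f at θ. -/
theorem phi_combinations_eq_schwarzian_and_its_derivative
    (f f1 f2 f3 f4 : ℝ → ℝ) (θ : ℝ) (U : Set ℝ)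
    (hU : IsOpen U) (hθU : θ ∈ U)
    (hf1 : ∀ x ∈ U, HasDerivAt f (f1 x) x)
    (hf2 : ∀ x ∈ U, HasDerivAt f1 (f2 x) x)
    (hf3 : ∀ x ∈ U, HasDerivAt f2 (f3 x) x)
    (hf4 : ∀ x ∈ U, HasDerivAt f3 (f4 x) x)
    (hf1ne : ∀ x ∈ U, f1 x ≠ 0) :
    let Sf : ℝ → ℝ := fun x => f3 x / f1 x - 3 / 2 * (f2 x / f1 x) ^ 2
    let φ₁ := f2 θ / (2 * f1 θ)
    let φ₂ := f3 θ / (6 * f1 θ)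
    let φ₃ := f4 θ / (24 * f1 θ)
    φ₂ - φ₁ ^ 2 = 1 / 6 * Sf θ ∧
      φ₃ - 2 * φ₂ * φ₁ + φ₁ ^ 3 = 1 / 24 * deriv Sf θ := by
  intro Sf φ₁ φ₂ φ₃
  have hne := hf1ne θ hθU
  constructor
  · show f3 θ / (6 * f1 θ) - (f2 θ / (2 * f1 θ)) ^ 2 =
      1 / 6 * (f3 θ / f1 θ - 3 / 2 * (f2 θ / f1 θ) ^ 2)
    field_simp
    ring
  · have hd1 : HasDerivAt (fun x => f3 x / f1 x)
        ((f4 θ * f1 θ - f3 θ * f2 θ) / f1 θ ^ 2) θ :=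
      (hf4 θ hθU).div (hf2 θ hθU) hne
    have hd2 : HasDerivAt (fun x => f2 x / f1 x)
        ((f3 θ * f1 θ - f2 θ * f2 θ) / f1 θ ^ 2) θ :=
      (hf3 θ hθU).div (hf2 θ hθU) hne
    have hd3 : HasDerivAt (fun x => (f2 x / f1 x) ^ 2)
        (2 * (f2 θ / f1 θ) ^ 1 * ((f3 θ * f1 θ - f2 θ * f2 θ) / f1 θ ^ 2)) θ := by
      simpa using hd2.fun_pow 2
    have hS : HasDerivAt Sf
        ((f4 θ * f1 θ - f3 θ * f2 θ) / f1 θ ^ 2 -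
          3 / 2 * (2 * (f2 θ / f1 θ) ^ 1 * ((f3 θ * f1 θ - f2 θ * f2 θ) / f1 θ ^ 2))) θ :=
      hd1.sub (hd3.const_mul (3 / 2))
    rw [hS.deriv]
    show f4 θ / (24 * f1 θ) - 2 * (f3 θ / (6 * f1 θ)) * (f2 θ / (2 * f1 θ)) +
        (f2 θ / (2 * f1 θ)) ^ 3 = _
    field_simp
    ring
end

section
/- Let A<B and let f:[A,B]→ℝ be four times continuously differentiable with f'(x)≠0 for all x∈[A,B]. For θ∈[A,B] set φ_k = f^{(k+1)}(θ)/((k+1)!·f'(θ)) and dᵢ = xᵢ−θ, and write Q₁₂₃ = Q(θ,x₁,x₂,x₃) and Q₃₄₁ = Q(θ,x₃,x₄,x₁) (the latter obtained from Q by the substitution (d₁,d₂,d₃)↦(d₃,d₄,d₁)). Then there exists a constant C>0, depending only on f and [A,B], such that for all x₁,x₂,x₃,x₄,θ∈[A,B]: |Q₁₂₃ − Q₃₄₁ − (d₁−d₃)·Q₁₂₃·Q₃₄₁ − (d₂−d₄)·((φ₂−φ₁²) + (φ₃−2φ₂φ₁+φ₁³)·(d₁+d₂+d₃+d₄))| ≤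 C·Δ_θ³, where Δ_θ = diam{x₁,x₂,x₃,x₄,θ}. -/
set_option maxHeartbeats 4000000
set_option maxRecDepth 8000

/-- The expression `Q(θ, x₁, x₂, x₃)` built from `φ_k = f⁽ᵏ⁺¹⁾(θ)/((k+1)!·f'(θ))`
and `dᵢ = xᵢ − θ`, where `f1, f2, f3, f4` are the first four derivatives of `f`. -/
noncomputable def Qexpr (f1 f2 f3 f4 : ℝ → ℝ) (θ x₁ x₂ x₃ : ℝ) : ℝ :=
  let φ₁ := f2 θ / (2 * f1 θ)
  let φ₂ := f3 θ / (6 * f1 θ)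
  let φ₃ := f4 θ / (24 * f1 θ)
  let d₁ := x₁ - θ
  let d₂ := x₂ - θ
  let d₃ := x₃ - θ
  φ₁ + (φ₂ * (d₁ + d₂ + d₃) - φ₁ ^ 2 * (d₂ + d₃)) +
    (φ₃ * (d₁ ^ 2 + d₂ ^ 2 + d₃ ^ 2 + d₁ * d₂ + d₂ * d₃ + d₃ * d₁) -
      φ₁ * φ₂ * ((d₂ ^ 2 + d₂ * d₃ + d₃ ^ 2) + (d₂ + d₃) * (d₁ + d₂ + d₃)) +
      φ₁ ^ 3 * (d₂ + d₃) ^ 2)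

/-- Abstract form of `Qexpr` with the `φ`'s as free variables. -/
noncomputable def QDab (a b c e1 e2 e3 : ℝ) : ℝ :=
  a + (b * (e1 + e2 + e3) - a ^ 2 * (e2 + e3)) +
    (c * (e1 ^ 2 + e2 ^ 2 + e3 ^ 2 + e1 * e2 + e2 * e3 + e3 * e1) -
      a * b * ((e2 ^ 2 + e2 * e3 + e3 ^ 2) + (e2 + e3) * (e1 + e2 + e3)) +
      a ^ 3 * (e2 + e3) ^ 2)

noncomputable def QDeval (a b c d1 d2 d3 d4 : ℝ) (t : ℤ × ℕ × ℕ × ℕ × ℕ × ℕ × ℕ × ℕ) : ℝ :=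
  (t.1 : ℝ) * a ^ t.2.1 * b ^ t.2.2.1 * c ^ t.2.2.2.1 * d1 ^ t.2.2.2.2.1 *
    d2 ^ t.2.2.2.2.2.1 * d3 ^ t.2.2.2.2.2.2.1 * d4 ^ t.2.2.2.2.2.2.2

def QDterms : List (ℤ × ℕ × ℕ × ℕ × ℕ × ℕ × ℕ × ℕ) := [
  (1, 0, 0, 2, 0, 0, 3, 2),
  (1, 0, 0, 2, 0, 0, 4, 1),
  (1, 0, 0, 2, 0, 0, 5, 0),
  (1, 0, 0, 2, 0, 1, 2, 2),
  (1, 0, 0, 2, 0, 1, 3, 1),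
  (1, 0, 0, 2, 0, 1, 4, 0),
  (1, 0, 0, 2, 0, 2, 1, 2),
  (1, 0, 0, 2, 0, 2, 2, 1),
  (1, 0, 0, 2, 0, 2, 3, 0),
  (1, 0, 0, 2, 1, 0, 3, 1),
  (1, 0, 0, 2, 1, 0, 4, 0),
  (1, 0, 0, 2, 1, 1, 2, 1),
  (1, 0, 0, 2, 1, 1, 3, 0),
  (-1, 0, 0, 2, 1, 2, 0, 2),
  (1, 0, 0, 2, 2, 0, 3, 0),
  (-1, 0, 0, 2, 2, 1, 0, 2),
  (-1, 0, 0, 2, 2, 1, 1, 1),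
  (-1, 0, 0, 2, 2, 2, 0, 1),
  (-1, 0, 0, 2, 3, 0, 0, 2),
  (-1, 0, 0, 2, 3, 0, 1, 1),
  (-1, 0, 0, 2, 3, 0, 2, 0),
  (-1, 0, 0, 2, 3, 1, 0, 1),
  (-1, 0, 0, 2, 3, 1, 1, 0),
  (-1, 0, 0, 2, 3, 2, 0, 0),
  (-1, 0, 0, 2, 4, 0, 0, 1),
  (-1, 0, 0, 2, 4, 0, 1, 0),
  (-1, 0, 0, 2, 4, 1, 0, 0),
  (-1, 0, 0, 2, 5, 0, 0, 0),
  (1, 0, 1, 1, 0, 0, 2, 2),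
  (2, 0, 1, 1, 0, 0, 3, 1),
  (2, 0, 1, 1, 0, 0, 4, 0),
  (1, 0, 1, 1, 0, 1, 1, 2),
  (2, 0, 1, 1, 0, 1, 2, 1),
  (2, 0, 1, 1, 0, 1, 3, 0),
  (1, 0, 1, 1, 0, 2, 1, 1),
  (1, 0, 1, 1, 0, 2, 2, 0),
  (1, 0, 1, 1, 1, 0, 2, 1),
  (2, 0, 1, 1, 1, 0, 3, 0),
  (-1, 0, 1, 1, 1, 1, 0, 2),
  (1, 0, 1, 1, 1, 1, 2, 0),
  (-1, 0, 1, 1, 1, 2, 0, 1),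
  (-1, 0, 1, 1, 2, 0, 0, 2),
  (-1, 0, 1, 1, 2, 0, 1, 1),
  (-2, 0, 1, 1, 2, 1, 0, 1),
  (-1, 0, 1, 1, 2, 1, 1, 0),
  (-1, 0, 1, 1, 2, 2, 0, 0),
  (-2, 0, 1, 1, 3, 0, 0, 1),
  (-2, 0, 1, 1, 3, 0, 1, 0),
  (-2, 0, 1, 1, 3, 1, 0, 0),
  (-2, 0, 1, 1, 4, 0, 0, 0),
  (1, 0, 2, 0, 0, 0, 2, 1),
  (1, 0, 2, 0, 0, 0, 3, 0),
  (1, 0, 2, 0, 0, 1, 1, 1),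
  (1, 0, 2, 0, 0, 1, 2, 0),
  (1, 0, 2, 0, 1, 0, 2, 0),
  (-1, 0, 2, 0, 1, 1, 0, 1),
  (-1, 0, 2, 0, 2, 0, 0, 1),
  (-1, 0, 2, 0, 2, 0, 1, 0),
  (-1, 0, 2, 0, 2, 1, 0, 0),
  (-1, 0, 2, 0, 3, 0, 0, 0),
  (1, 1, 0, 1, 0, 0, 1, 2),
  (1, 1, 0, 1, 0, 0, 2, 1),
  (2, 1, 0, 1, 0, 0, 3, 0),
  (1, 1, 0, 1, 0, 1, 2, 0),
  (1, 1, 0, 1, 0, 2, 1, 0),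
  (-1, 1, 0, 1, 1, 0, 0, 2),
  (-1, 1, 0, 1, 1, 2, 0, 0),
  (-1, 1, 0, 1, 2, 0, 0, 1),
  (-1, 1, 0, 1, 2, 1, 0, 0),
  (-2, 1, 0, 1, 3, 0, 0, 0),
  (-4, 1, 1, 1, 0, 0, 3, 2),
  (-3, 1, 1, 1, 0, 0, 4, 1),
  (-2, 1, 1, 1, 0, 0, 5, 0),
  (-5, 1, 1, 1, 0, 1, 2, 2),
  (-4, 1, 1, 1, 0, 1, 3, 1),
  (-3, 1, 1, 1, 0, 1, 4, 0),
  (-4, 1, 1, 1, 0, 2, 1, 2),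
  (-3, 1, 1, 1, 0, 2, 2, 1),
  (-2, 1, 1, 1, 0, 2, 3, 0),
  (1, 1, 1, 1, 1, 0, 2, 2),
  (-4, 1, 1, 1, 1, 0, 3, 1),
  (-2, 1, 1, 1, 1, 0, 4, 0),
  (2, 1, 1, 1, 1, 1, 1, 2),
  (-4, 1, 1, 1, 1, 1, 2, 1),
  (-2, 1, 1, 1, 1, 1, 3, 0),
  (4, 1, 1, 1, 1, 2, 0, 2),
  (-2, 1, 1, 1, 1, 2, 1, 1),
  (-1, 1, 1, 1, 1, 2, 2, 0),
  (1, 1, 1, 1, 2, 0, 1, 2),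
  (2, 1, 1, 1, 2, 0, 2, 1),
  (-2, 1, 1, 1, 2, 0, 3, 0),
  (3, 1, 1, 1, 2, 1, 0, 2),
  (4, 1, 1, 1, 2, 1, 1, 1),
  (-2, 1, 1, 1, 2, 1, 2, 0),
  (5, 1, 1, 1, 2, 2, 0, 1),
  (-1, 1, 1, 1, 2, 2, 1, 0),
  (2, 1, 1, 1, 3, 0, 0, 2),
  (2, 1, 1, 1, 3, 0, 1, 1),
  (2, 1, 1, 1, 3, 0, 2, 0),
  (4, 1, 1, 1, 3, 1, 0, 1),
  (4, 1, 1, 1, 3, 1, 1, 0),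
  (4, 1, 1, 1, 3, 2, 0, 0),
  (3, 1, 1, 1, 4, 0, 0, 1),
  (2, 1, 1, 1, 4, 0, 1, 0),
  (3, 1, 1, 1, 4, 1, 0, 0),
  (2, 1, 1, 1, 5, 0, 0, 0),
  (-2, 1, 2, 0, 0, 0, 2, 2),
  (-3, 1, 2, 0, 0, 0, 3, 1),
  (-2, 1, 2, 0, 0, 0, 4, 0),
  (-2, 1, 2, 0, 0, 1, 1, 2),
  (-4, 1, 2, 0, 0, 1, 2, 1),
  (-3, 1, 2, 0, 0, 1, 3, 0),
  (-2, 1, 2, 0, 0, 2, 1, 1),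
  (-2, 1, 2, 0, 0, 2, 2, 0),
  (-2, 1, 2, 0, 1, 0, 2, 1),
  (-2, 1, 2, 0, 1, 0, 3, 0),
  (2, 1, 2, 0, 1, 1, 0, 2),
  (-2, 1, 2, 0, 1, 1, 2, 0),
  (2, 1, 2, 0, 1, 2, 0, 1),
  (2, 1, 2, 0, 2, 0, 0, 2),
  (2, 1, 2, 0, 2, 0, 1, 1),
  (4, 1, 2, 0, 2, 1, 0, 1),
  (2, 1, 2, 0, 2, 1, 1, 0),
  (2, 1, 2, 0, 2, 2, 0, 0),
  (3, 1, 2, 0, 3, 0, 0, 1),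
  (2, 1, 2, 0, 3, 0, 1, 0),
  (3, 1, 2, 0, 3, 1, 0, 0),
  (2, 1, 2, 0, 4, 0, 0, 0),
  (-1, 2, 0, 1, 0, 0, 2, 2),
  (-2, 2, 0, 1, 0, 0, 3, 1),
  (-1, 2, 0, 1, 0, 0, 4, 0),
  (-1, 2, 0, 1, 0, 1, 1, 2),
  (-2, 2, 0, 1, 0, 1, 2, 1),
  (-1, 2, 0, 1, 0, 1, 3, 0),
  (-1, 2, 0, 1, 0, 2, 1, 1),
  (1, 2, 0, 1, 1, 0, 1, 2),
  (-1, 2, 0, 1, 1, 0, 3, 0),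
  (1, 2, 0, 1, 1, 1, 0, 2),
  (-1, 2, 0, 1, 1, 1, 2, 0),
  (1, 2, 0, 1, 1, 2, 0, 1),
  (-1, 2, 0, 1, 1, 2, 1, 0),
  (1, 2, 0, 1, 2, 0, 1, 1),
  (2, 2, 0, 1, 2, 1, 0, 1),
  (1, 2, 0, 1, 2, 2, 0, 0),
  (1, 2, 0, 1, 3, 0, 0, 1),
  (1, 2, 0, 1, 3, 0, 1, 0),
  (2, 2, 0, 1, 3, 1, 0, 0),
  (1, 2, 0, 1, 4, 0, 0, 0),
  (-2, 2, 1, 0, 0, 0, 1, 2),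
  (-3, 2, 1, 0, 0, 0, 2, 1),
  (-3, 2, 1, 0, 0, 0, 3, 0),
  (-2, 2, 1, 0, 0, 1, 1, 1),
  (-4, 2, 1, 0, 0, 1, 2, 0),
  (-2, 2, 1, 0, 0, 2, 1, 0),
  (2, 2, 1, 0, 1, 0, 0, 2),
  (-1, 2, 1, 0, 1, 0, 1, 1),
  (-1, 2, 1, 0, 1, 0, 2, 0),
  (2, 2, 1, 0, 1, 1, 0, 1),
  (1, 2, 1, 0, 1, 1, 1, 0),
  (2, 2, 1, 0, 1, 2, 0, 0),
  (4, 2, 1, 0, 2, 0, 0, 1),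
  (1, 2, 1, 0, 2, 0, 1, 0),
  (3, 2, 1, 0, 2, 1, 0, 0),
  (3, 2, 1, 0, 3, 0, 0, 0),
  (4, 2, 2, 0, 0, 0, 3, 2),
  (2, 2, 2, 0, 0, 0, 4, 1),
  (6, 2, 2, 0, 0, 1, 2, 2),
  (3, 2, 2, 0, 0, 1, 3, 1),
  (4, 2, 2, 0, 0, 2, 1, 2),
  (2, 2, 2, 0, 0, 2, 2, 1),
  (-2, 2, 2, 0, 1, 0, 2, 2),
  (5, 2, 2, 0, 1, 0, 3, 1),
  (2, 2, 2, 0, 1, 0, 4, 0),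
  (-4, 2, 2, 0, 1, 1, 1, 2),
  (7, 2, 2, 0, 1, 1, 2, 1),
  (3, 2, 2, 0, 1, 1, 3, 0),
  (-4, 2, 2, 0, 1, 2, 0, 2),
  (4, 2, 2, 0, 1, 2, 1, 1),
  (2, 2, 2, 0, 1, 2, 2, 0),
  (-2, 2, 2, 0, 2, 0, 1, 2),
  (-4, 2, 2, 0, 2, 0, 2, 1),
  (3, 2, 2, 0, 2, 0, 3, 0),
  (-2, 2, 2, 0, 2, 1, 0, 2),
  (-7, 2, 2, 0, 2, 1, 1, 1),
  (4, 2, 2, 0, 2, 1, 2, 0),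
  (-6, 2, 2, 0, 2, 2, 0, 1),
  (2, 2, 2, 0, 2, 2, 1, 0),
  (-3, 2, 2, 0, 3, 0, 1, 1),
  (-3, 2, 2, 0, 3, 0, 2, 0),
  (-3, 2, 2, 0, 3, 1, 0, 1),
  (-5, 2, 2, 0, 3, 1, 1, 0),
  (-4, 2, 2, 0, 3, 2, 0, 0),
  (-2, 2, 2, 0, 4, 0, 1, 0),
  (-2, 2, 2, 0, 4, 1, 0, 0),
  (2, 3, 0, 1, 0, 0, 3, 2),
  (1, 3, 0, 1, 0, 0, 4, 1),
  (1, 3, 0, 1, 0, 0, 5, 0),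
  (3, 3, 0, 1, 0, 1, 2, 2),
  (2, 3, 0, 1, 0, 1, 3, 1),
  (2, 3, 0, 1, 0, 1, 4, 0),
  (2, 3, 0, 1, 0, 2, 1, 2),
  (1, 3, 0, 1, 0, 2, 2, 1),
  (1, 3, 0, 1, 0, 2, 3, 0),
  (-1, 3, 0, 1, 1, 0, 2, 2),
  (2, 3, 0, 1, 1, 0, 3, 1),
  (-2, 3, 0, 1, 1, 1, 1, 2),
  (2, 3, 0, 1, 1, 1, 2, 1),
  (-2, 3, 0, 1, 1, 2, 0, 2),
  (2, 3, 0, 1, 1, 2, 1, 1),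
  (-1, 3, 0, 1, 2, 0, 2, 1),
  (1, 3, 0, 1, 2, 0, 3, 0),
  (-1, 3, 0, 1, 2, 1, 0, 2),
  (-2, 3, 0, 1, 2, 1, 1, 1),
  (1, 3, 0, 1, 2, 1, 2, 0),
  (-3, 3, 0, 1, 2, 2, 0, 1),
  (1, 3, 0, 1, 2, 2, 1, 0),
  (-1, 3, 0, 1, 3, 0, 0, 2),
  (-1, 3, 0, 1, 3, 0, 2, 0),
  (-2, 3, 0, 1, 3, 1, 0, 1),
  (-2, 3, 0, 1, 3, 1, 1, 0),
  (-2, 3, 0, 1, 3, 2, 0, 0),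
  (-2, 3, 0, 1, 4, 0, 0, 1),
  (-1, 3, 0, 1, 4, 1, 0, 0),
  (-1, 3, 0, 1, 5, 0, 0, 0),
  (3, 3, 1, 0, 0, 0, 2, 2),
  (4, 3, 1, 0, 0, 0, 3, 1),
  (1, 3, 1, 0, 0, 0, 4, 0),
  (3, 3, 1, 0, 0, 1, 1, 2),
  (6, 3, 1, 0, 0, 1, 2, 1),
  (2, 3, 1, 0, 0, 1, 3, 0),
  (3, 3, 1, 0, 0, 2, 1, 1),
  (1, 3, 1, 0, 0, 2, 2, 0),
  (-2, 3, 1, 0, 1, 0, 1, 2),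
  (2, 3, 1, 0, 1, 0, 2, 1),
  (3, 3, 1, 0, 1, 0, 3, 0),
  (-3, 3, 1, 0, 1, 1, 0, 2),
  (4, 3, 1, 0, 1, 1, 2, 0),
  (-3, 3, 1, 0, 1, 2, 0, 1),
  (2, 3, 1, 0, 1, 2, 1, 0),
  (-1, 3, 1, 0, 2, 0, 0, 2),
  (-4, 3, 1, 0, 2, 0, 1, 1),
  (-6, 3, 1, 0, 2, 1, 0, 1),
  (-2, 3, 1, 0, 2, 1, 1, 0),
  (-3, 3, 1, 0, 2, 2, 0, 0),
  (-2, 3, 1, 0, 3, 0, 0, 1),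
  (-3, 3, 1, 0, 3, 0, 1, 0),
  (-4, 3, 1, 0, 3, 1, 0, 0),
  (-1, 3, 1, 0, 4, 0, 0, 0),
  (1, 4, 0, 0, 0, 0, 1, 2),
  (1, 4, 0, 0, 0, 0, 2, 1),
  (1, 4, 0, 0, 0, 0, 3, 0),
  (1, 4, 0, 0, 0, 1, 1, 1),
  (2, 4, 0, 0, 0, 1, 2, 0),
  (1, 4, 0, 0, 0, 2, 1, 0),
  (-1, 4, 0, 0, 1, 0, 0, 2),
  (1, 4, 0, 0, 1, 0, 1, 1),
  (-1, 4, 0, 0, 1, 1, 0, 1),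
  (-1, 4, 0, 0, 1, 1, 1, 0),
  (-1, 4, 0, 0, 1, 2, 0, 0),
  (-2, 4, 0, 0, 2, 0, 0, 1),
  (-1, 4, 0, 0, 2, 1, 0, 0),
  (-1, 4, 0, 0, 3, 0, 0, 0),
  (-4, 4, 1, 0, 0, 0, 3, 2),
  (-1, 4, 1, 0, 0, 0, 4, 1),
  (-7, 4, 1, 0, 0, 1, 2, 2),
  (-2, 4, 1, 0, 0, 1, 3, 1),
  (-4, 4, 1, 0, 0, 2, 1, 2),
  (-1, 4, 1, 0, 0, 2, 2, 1),
  (3, 4, 1, 0, 1, 0, 2, 2),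
  (-6, 4, 1, 0, 1, 0, 3, 1),
  (-1, 4, 1, 0, 1, 0, 4, 0),
  (6, 4, 1, 0, 1, 1, 1, 2),
  (-10, 4, 1, 0, 1, 1, 2, 1),
  (-2, 4, 1, 0, 1, 1, 3, 0),
  (4, 4, 1, 0, 1, 2, 0, 2),
  (-6, 4, 1, 0, 1, 2, 1, 1),
  (-1, 4, 1, 0, 1, 2, 2, 0),
  (1, 4, 1, 0, 2, 0, 1, 2),
  (5, 4, 1, 0, 2, 0, 2, 1),
  (-3, 4, 1, 0, 2, 0, 3, 0),
  (1, 4, 1, 0, 2, 1, 0, 2),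
  (10, 4, 1, 0, 2, 1, 1, 1),
  (-5, 4, 1, 0, 2, 1, 2, 0),
  (7, 4, 1, 0, 2, 2, 0, 1),
  (-3, 4, 1, 0, 2, 2, 1, 0),
  (2, 4, 1, 0, 3, 0, 1, 1),
  (3, 4, 1, 0, 3, 0, 2, 0),
  (2, 4, 1, 0, 3, 1, 0, 1),
  (6, 4, 1, 0, 3, 1, 1, 0),
  (4, 4, 1, 0, 3, 2, 0, 0),
  (1, 4, 1, 0, 4, 0, 1, 0),
  (1, 4, 1, 0, 4, 1, 0, 0),
  (-1, 5, 0, 0, 0, 0, 2, 2),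
  (-1, 5, 0, 0, 0, 0, 3, 1),
  (-1, 5, 0, 0, 0, 1, 1, 2),
  (-2, 5, 0, 0, 0, 1, 2, 1),
  (-1, 5, 0, 0, 0, 2, 1, 1),
  (1, 5, 0, 0, 1, 0, 1, 2),
  (-1, 5, 0, 0, 1, 0, 2, 1),
  (-1, 5, 0, 0, 1, 0, 3, 0),
  (1, 5, 0, 0, 1, 1, 0, 2),
  (-2, 5, 0, 0, 1, 1, 2, 0),
  (1, 5, 0, 0, 1, 2, 0, 1),
  (-1, 5, 0, 0, 1, 2, 1, 0),
  (2, 5, 0, 0, 2, 0, 1, 1),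
  (2, 5, 0, 0, 2, 1, 0, 1),
  (1, 5, 0, 0, 2, 1, 1, 0),
  (1, 5, 0, 0, 2, 2, 0, 0),
  (1, 5, 0, 0, 3, 0, 1, 0),
  (1, 5, 0, 0, 3, 1, 0, 0),
  (1, 6, 0, 0, 0, 0, 3, 2),
  (2, 6, 0, 0, 0, 1, 2, 2),
  (1, 6, 0, 0, 0, 2, 1, 2),
  (-1, 6, 0, 0, 1, 0, 2, 2),
  (2, 6, 0, 0, 1, 0, 3, 1),
  (-2, 6, 0, 0, 1, 1, 1, 2),
  (4, 6, 0, 0, 1, 1, 2, 1),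
  (-1, 6, 0, 0, 1, 2, 0, 2),
  (2, 6, 0, 0, 1, 2, 1, 1),
  (-2, 6, 0, 0, 2, 0, 2, 1),
  (1, 6, 0, 0, 2, 0, 3, 0),
  (-4, 6, 0, 0, 2, 1, 1, 1),
  (2, 6, 0, 0, 2, 1, 2, 0),
  (-2, 6, 0, 0, 2, 2, 0, 1),
  (1, 6, 0, 0, 2, 2, 1, 0),
  (-1, 6, 0, 0, 3, 0, 2, 0),
  (-2, 6, 0, 0, 3, 1, 1, 0),
  (-1, 6, 0, 0, 3, 2, 0, 0)]

lemma QDkey (a b c d1 d2 d3 d4 : ℝ) :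
    QDab a b c d1 d2 d3 - QDab a b c d3 d4 d1 -
      (d1 - d3) * QDab a b c d1 d2 d3 * QDab a b c d3 d4 d1 -
      (d2 - d4) * ((b - a ^ 2) + (c - 2 * b * a + a ^ 3) * (d1 + d2 + d3 + d4)) =
      (QDterms.map (QDeval a b c d1 d2 d3 d4)).sum := by
  simp only [QDterms, QDeval, List.map_cons, List.map_nil, List.sum_cons, List.sum_nil, QDab]
  push_cast
  ring

lemma QDabs_list (l : List ℝ) : |l.sum| ≤ (l.map (fun x => |x|)).sum := by
  induction l with
  | nil => simp
  | cons x xs ih =>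
      simp only [List.sum_cons, List.map_cons]
      exact (abs_add_le _ _).trans (by linarith)

lemma QDmono (M K Δ a b c d1 d2 d3 d4 : ℝ)
    (hM : 1 ≤ M) (hK : 1 ≤ K) (hΔ0 : 0 ≤ Δ) (hΔK : Δ ≤ K)
    (ha : |a| ≤ M) (hb : |b| ≤ M) (hc : |c| ≤ M)
    (h1 : |d1| ≤ Δ) (h2 : |d2| ≤ Δ) (h3 : |d3| ≤ Δ) (h4 : |d4| ≤ Δ)
    (n : ℤ) (i j k e1 e2 e3 e4 : ℕ)
    (hlo : 3 ≤ e1 + e2 + e3 + e4) (hhi : e1 + e2 + e3 + e4 ≤ 5) (hp : i + j + k ≤ 6) :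
    |(n : ℝ) * a ^ i * b ^ j * c ^ k * d1 ^ e1 * d2 ^ e2 * d3 ^ e3 * d4 ^ e4| ≤
      (n.natAbs : ℝ) * (M ^ 6 * K ^ 2 * Δ ^ 3) := by
  have hM0 : (0 : ℝ) ≤ M := le_trans zero_le_one hM
  have hK0 : (0 : ℝ) ≤ K := le_trans zero_le_one hK
  have hnv : |(n : ℝ)| = (n.natAbs : ℝ) := by
    rw [Nat.cast_natAbs]; push_cast; ring
  calc |(n : ℝ) * a ^ i * b ^ j * c ^ k * d1 ^ e1 * d2 ^ e2 * d3 ^ e3 * d4 ^ e4|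
      = (n.natAbs : ℝ) * (|a| ^ i * |b| ^ j * |c| ^ k) *
          (|d1| ^ e1 * |d2| ^ e2 * |d3| ^ e3 * |d4| ^ e4) := by
        simp only [abs_mul, abs_pow, hnv]; ring
    _ ≤ (n.natAbs : ℝ) * (M ^ i * M ^ j * M ^ k) * (Δ ^ e1 * Δ ^ e2 * Δ ^ e3 * Δ ^ e4) := by
        gcongr <;> first
          | exact abs_nonneg _
          | assumption
    _ = (n.natAbs : ℝ) * (M ^ (i + j + k) * Δ ^ (e1 + e2 + e3 + e4)) := by
        rw [pow_add, pow_add, pow_add, pow_add, pow_add]; ring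
    _ ≤ (n.natAbs : ℝ) * (M ^ 6 * (Δ ^ 3 * K ^ (e1 + e2 + e3 + e4 - 3))) := by
        have hMle : M ^ (i + j + k) ≤ M ^ 6 := pow_le_pow_right₀ hM hp
        have hδ : Δ ^ (e1 + e2 + e3 + e4) = Δ ^ 3 * Δ ^ (e1 + e2 + e3 + e4 - 3) := by
          rw [← pow_add]
          congr 1
          omega
        have hδle : Δ ^ (e1 + e2 + e3 + e4 - 3) ≤ K ^ (e1 + e2 + e3 + e4 - 3) :=
          pow_le_pow_left₀ hΔ0 hΔK _
        have : Δ ^ (e1 + e2 + e3 + e4) ≤ Δ ^ 3 * K ^ (e1 + e2 + e3 + e4 - 3) := by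
          rw [hδ]
          exact mul_le_mul_of_nonneg_left hδle (by positivity)
        have h6 : (0:ℝ) ≤ M ^ (i+j+k) := by positivity
        gcongr
    _ ≤ (n.natAbs : ℝ) * (M ^ 6 * (Δ ^ 3 * K ^ 2)) := by
        have : K ^ (e1 + e2 + e3 + e4 - 3) ≤ K ^ 2 := pow_le_pow_right₀ hK (by omega)
        gcongr
    _ = (n.natAbs : ℝ) * (M ^ 6 * K ^ 2 * Δ ^ 3) := by ring

lemma QDsum_natAbs : (QDterms.map (fun t => t.1.natAbs)).sum = 698 := by decide

lemma QDok : ∀ t ∈ QDterms,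
    3 ≤ t.2.2.2.2.1 + t.2.2.2.2.2.1 + t.2.2.2.2.2.2.1 + t.2.2.2.2.2.2.2 ∧
    t.2.2.2.2.1 + t.2.2.2.2.2.1 + t.2.2.2.2.2.2.1 + t.2.2.2.2.2.2.2 ≤ 5 ∧
    t.2.1 + t.2.2.1 + t.2.2.2.1 ≤ 6 := by decide

lemma QDbound (M K Δ a b c d1 d2 d3 d4 : ℝ)
    (hM : 1 ≤ M) (hK : 1 ≤ K) (hΔ0 : 0 ≤ Δ) (hΔK : Δ ≤ K)
    (ha : |a| ≤ M) (hb : |b| ≤ M) (hc : |c| ≤ M)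
    (h1 : |d1| ≤ Δ) (h2 : |d2| ≤ Δ) (h3 : |d3| ≤ Δ) (h4 : |d4| ≤ Δ) :
    |QDab a b c d1 d2 d3 - QDab a b c d3 d4 d1 -
      (d1 - d3) * QDab a b c d1 d2 d3 * QDab a b c d3 d4 d1 -
      (d2 - d4) * ((b - a ^ 2) + (c - 2 * b * a + a ^ 3) * (d1 + d2 + d3 + d4))| ≤
      698 * (M ^ 6 * K ^ 2) * Δ ^ 3 := by
  rw [QDkey]
  calc |(QDterms.map (QDeval a b c d1 d2 d3 d4)).sum|
      ≤ ((QDterms.map (QDeval a b c d1 d2 d3 d4)).map (fun x => |x|)).sum := QDabs_list _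
    _ = (QDterms.map (fun t => |QDeval a b c d1 d2 d3 d4 t|)).sum := by
        rw [List.map_map]; rfl
    _ ≤ (QDterms.map (fun t => (t.1.natAbs : ℝ) * (M ^ 6 * K ^ 2 * Δ ^ 3))).sum := by
        apply List.sum_le_sum
        intro t ht
        obtain ⟨hlo, hhi, hp⟩ := QDok t ht
        exact QDmono M K Δ a b c d1 d2 d3 d4 hM hK hΔ0 hΔK ha hb hc h1 h2 h3 h4
          t.1 t.2.1 t.2.2.1 t.2.2.2.1 t.2.2.2.2.1 t.2.2.2.2.2.1 t.2.2.2.2.2.2.1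
          t.2.2.2.2.2.2.2 hlo hhi hp
    _ = (QDterms.map (fun t => ((t.1.natAbs : ℕ) : ℝ))).sum * (M ^ 6 * K ^ 2 * Δ ^ 3) :=
        List.sum_map_mul_right _ _ _
    _ = 698 * (M ^ 6 * K ^ 2) * Δ ^ 3 := by
        have : (QDterms.map (fun t => ((t.1.natAbs : ℕ) : ℝ))).sum
            = (((QDterms.map (fun t => t.1.natAbs)).sum : ℕ) : ℝ) := by
          rw [Nat.cast_list_sum, List.map_map]; rfl
        rw [this, QDsum_natAbs]
        norm_num
        ring

theorem Q_difference_expansion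
    (A B : ℝ) (hAB : A < B)
    (f f1 f2 f3 f4 : ℝ → ℝ)
    (hf1 : ∀ x ∈ Set.Icc A B, HasDerivWithinAt f (f1 x) (Set.Icc A B) x)
    (hf2 : ∀ x ∈ Set.Icc A B, HasDerivWithinAt f1 (f2 x) (Set.Icc A B) x)
    (hf3 : ∀ x ∈ Set.Icc A B, HasDerivWithinAt f2 (f3 x) (Set.Icc A B) x)
    (hf4 : ∀ x ∈ Set.Icc A B, HasDerivWithinAt f3 (f4 x) (Set.Icc A B) x)
    (hf4cont : ContinuousOn f4 (Set.Icc A B))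
    (hf1ne : ∀ x ∈ Set.Icc A B, f1 x ≠ 0) :
    ∃ C > 0, ∀ x₁ ∈ Set.Icc A B, ∀ x₂ ∈ Set.Icc A B, ∀ x₃ ∈ Set.Icc A B,
      ∀ x₄ ∈ Set.Icc A B, ∀ θ ∈ Set.Icc A B,
      let φ₁ := f2 θ / (2 * f1 θ)
      let φ₂ := f3 θ / (6 * f1 θ)
      let φ₃ := f4 θ / (24 * f1 θ)
      let d₁ := x₁ - θ
      let d₂ := x₂ - θ
      let d₃ := x₃ - θ
      let d₄ := x₄ - θ
      let Q₁₂₃ := Qexpr f1 f2 f3 f4 θ x₁ x₂ x₃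
      let Q₃₄₁ := Qexpr f1 f2 f3 f4 θ x₃ x₄ x₁
      |Q₁₂₃ - Q₃₄₁ - (d₁ - d₃) * Q₁₂₃ * Q₃₄₁ -
          (d₂ - d₄) * ((φ₂ - φ₁ ^ 2) +
            (φ₃ - 2 * φ₂ * φ₁ + φ₁ ^ 3) * (d₁ + d₂ + d₃ + d₄))| ≤
        C * Metric.diam ({x₁, x₂, x₃, x₄, θ} : Set ℝ) ^ 3 := by
  have hIcc := isCompact_Icc (a := A) (b := B)
  have hf1c : ContinuousOn f1 (Set.Icc A B) := fun x hx => (hf2 x hx).continuousWithinAt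
  have hf2c : ContinuousOn f2 (Set.Icc A B) := fun x hx => (hf3 x hx).continuousWithinAt
  have hf3c : ContinuousOn f3 (Set.Icc A B) := fun x hx => (hf4 x hx).continuousWithinAt
  have hden2 : ∀ x ∈ Set.Icc A B, (2 : ℝ) * f1 x ≠ 0 := fun x hx =>
    mul_ne_zero two_ne_zero (hf1ne x hx)
  have hden6 : ∀ x ∈ Set.Icc A B, (6 : ℝ) * f1 x ≠ 0 := fun x hx =>
    mul_ne_zero (by norm_num) (hf1ne x hx)
  have hden24 : ∀ x ∈ Set.Icc A B, (24 : ℝ) * f1 x ≠ 0 := fun x hx =>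
    mul_ne_zero (by norm_num) (hf1ne x hx)
  obtain ⟨M1, hM1⟩ := hIcc.exists_bound_of_continuousOn
    (hf2c.div (continuousOn_const.mul hf1c) hden2)
  obtain ⟨M2, hM2⟩ := hIcc.exists_bound_of_continuousOn
    (hf3c.div (continuousOn_const.mul hf1c) hden6)
  obtain ⟨M3, hM3⟩ := hIcc.exists_bound_of_continuousOn
    (hf4cont.div (continuousOn_const.mul hf1c) hden24)
  set M : ℝ := max 1 (max M1 (max M2 M3)) with hMdef
  have hM : (1 : ℝ) ≤ M := le_max_left _ _
  set K : ℝ := max 1 (B - A) with hKdef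
  have hK : (1 : ℝ) ≤ K := le_max_left _ _
  refine ⟨698 * (M ^ 6 * K ^ 2), by positivity, ?_⟩
  intro x₁ hx₁ x₂ hx₂ x₃ hx₃ x₄ hx₄ θ hθ
  dsimp only
  set Δ : ℝ := Metric.diam ({x₁, x₂, x₃, x₄, θ} : Set ℝ) with hΔdef
  have hSb : Bornology.IsBounded ({x₁, x₂, x₃, x₄, θ} : Set ℝ) :=
    (Set.toFinite _).isBounded
  have hΔ0 : 0 ≤ Δ := Metric.diam_nonneg
  have hSsub : ({x₁, x₂, x₃, x₄, θ} : Set ℝ) ⊆ Set.Icc A B := by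
    intro y hy
    simp only [Set.mem_insert_iff, Set.mem_singleton_iff] at hy
    rcases hy with rfl | rfl | rfl | rfl | rfl <;> assumption
  have hΔK : Δ ≤ K := by
    calc Δ ≤ Metric.diam (Set.Icc A B) := Metric.diam_mono hSsub (Metric.isBounded_Icc A B)
      _ = B - A := Real.diam_Icc hAB.le
      _ ≤ K := le_max_right _ _
  have hmem : ∀ y ∈ ({x₁, x₂, x₃, x₄, θ} : Set ℝ), |y - θ| ≤ Δ := by
    intro y hy
    rw [← Real.dist_eq]
    exact Metric.dist_le_diam_of_mem hSb hy (by simp)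
  have hd1 : |x₁ - θ| ≤ Δ := hmem x₁ (by simp)
  have hd2 : |x₂ - θ| ≤ Δ := hmem x₂ (by simp)
  have hd3 : |x₃ - θ| ≤ Δ := hmem x₃ (by simp)
  have hd4 : |x₄ - θ| ≤ Δ := hmem x₄ (by simp)
  have ha : |f2 θ / (2 * f1 θ)| ≤ M := by
    have := hM1 θ hθ
    rw [Real.norm_eq_abs] at this
    exact this.trans ((le_max_left _ _).trans (le_max_right _ _))
  have hb : |f3 θ / (6 * f1 θ)| ≤ M := by
    have := hM2 θ hθ
    rw [Real.norm_eq_abs] at this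
    exact this.trans (((le_max_left _ _).trans (le_max_right _ _)).trans (le_max_right _ _))
  have hc : |f4 θ / (24 * f1 θ)| ≤ M := by
    have := hM3 θ hθ
    rw [Real.norm_eq_abs] at this
    exact this.trans (((le_max_right _ _).trans (le_max_right _ _)).trans (le_max_right _ _))
  have e1 : Qexpr f1 f2 f3 f4 θ x₁ x₂ x₃ =
      QDab (f2 θ / (2 * f1 θ)) (f3 θ / (6 * f1 θ)) (f4 θ / (24 * f1 θ))
        (x₁ - θ) (x₂ - θ) (x₃ - θ) := rfl
  have e2 : Qexpr f1 f2 f3 f4 θ x₃ x₄ x₁ =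
      QDab (f2 θ / (2 * f1 θ)) (f3 θ / (6 * f1 θ)) (f4 θ / (24 * f1 θ))
        (x₃ - θ) (x₄ - θ) (x₁ - θ) := rfl
  rw [e1, e2]
  exact QDbound M K Δ _ _ _ _ _ _ _ hM hK hΔ0 hΔK ha hb hc hd1 hd2 hd3 hd4
end
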